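/- arXiv:1202.0004 — 8 statements merged into one kernel-verified Lean document; each statement's English description precedes it below -/
import Mathlib

section
/- Let a be a real number, λ > 0, and let f be Lebesgue integrable on [a, a+ε] for some ε > 0 and right-continuous at a. Then lim_{x→a⁺} Γ(λ+1) · (I_a^λ f)(x) / (x−a)^λ = f(a); in particular (I_a^λ f)(x) → 0 as x → a⁺. -/
open MeasureTheory Filter Set Topology

/-!
Since `Γ(λ+1) = λ Γ(λ)` and the kernel `(x - y)^(λ-1)` is nonnegative with mass `(x - a)^λ / λ`
on `[a, x]`, the normalized quantity is a weighted average of `f` over `(a, x]`; by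
right-continuity it is within `δ` of `f a` once `x` is close to `a`. Multiplying by
`(x - a)^λ / Γ(λ+1) → 0` gives the second limit.
-/

theorem intervalIntegrable_sub_rpow_sub_one {lam : ℝ} (hlam : 0 < lam) (a x : ℝ) :
    IntervalIntegrable (fun y => (x - y) ^ (lam - 1)) volume a x := by
  simpa using ((intervalIntegral.intervalIntegrable_rpow' (a := 0) (b := x - a)
    (r := lam - 1) (by linarith)).comp_sub_left x).symm

theorem integral_sub_rpow_sub_one {lam : ℝ} (hlam : 0 < lam) (a x : ℝ) :
    ∫ y in a..x, (x - y) ^ (lam - 1) = (x - a) ^ lam / lam := by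
  rw [intervalIntegral.integral_comp_sub_left (fun t => t ^ (lam - 1)) x, sub_self,
    integral_rpow (Or.inl (by linarith)), sub_add_cancel,
    Real.zero_rpow hlam.ne', sub_zero]

theorem IntervalIntegrable.mul_of_norm_le {K f : ℝ → ℝ} {a x M : ℝ} (hax : a ≤ x)
    (hK : IntervalIntegrable K volume a x) (hf : IntegrableOn f (Ioc a x))
    (hfM : ∀ y ∈ Ioc a x, ‖f y‖ ≤ M) :
    IntervalIntegrable (fun y => K y * f y) volume a x := by
  rw [intervalIntegrable_iff_integrableOn_Ioc_of_le hax] at hK ⊢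
  simp_rw [mul_comm (K _)]
  exact hK.bdd_mul hf.aestronglyMeasurable ((ae_restrict_iff' measurableSet_Ioc).mpr (.of_forall hfM))

theorem abs_integral_mul_sub_le {K f : ℝ → ℝ} {a x c δ : ℝ} (hax : a ≤ x)
    (hK : IntervalIntegrable K volume a x)
    (hKf : IntervalIntegrable (fun y => K y * f y) volume a x)
    (hK0 : ∀ y ∈ Ioc a x, 0 ≤ K y) (hf : ∀ y ∈ Ioc a x, |f y - c| ≤ δ) :
    |(∫ y in a..x, K y * f y) - c * ∫ y in a..x, K y| ≤ δ * ∫ y in a..x, K y := by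
  have hbound : ∀ y ∈ Ioc a x, ‖K y * f y - c * K y‖ ≤ δ * K y := fun y hy => by
    rw [Real.norm_eq_abs, mul_comm c, ← mul_sub, abs_mul, abs_of_nonneg (hK0 y hy), mul_comm]
    exact mul_le_mul_of_nonneg_right (hf y hy) (hK0 y hy)
  rw [← intervalIntegral.integral_const_mul, ← intervalIntegral.integral_sub hKf (hK.const_mul c),
    ← intervalIntegral.integral_const_mul]
  exact intervalIntegral.norm_integral_le_of_norm_le hax (.of_forall hbound) (hK.const_mul δ)

theorem tendsto_integral_sub_rpow_mul_div {a lam ε : ℝ} {f : ℝ → ℝ} (hlam : 0 < lam)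
    (hε : 0 < ε) (hint : IntegrableOn f (Icc a (a + ε))) (hcont : ContinuousWithinAt f (Ici a) a) :
    Tendsto (fun x => (∫ y in a..x, (x - y) ^ (lam - 1) * f y) / ((x - a) ^ lam / lam))
      (𝓝[>] a) (𝓝 (f a)) := by
  rw [Metric.tendsto_nhds]
  intro δ hδ
  have hnear : ∀ᶠ x in 𝓝[>] a, x ≤ a + ε ∧ ∀ y ∈ Ioc a x, |f y - f a| ≤ δ / 2 := by
    obtain ⟨u, hau, hu⟩ :=
      mem_nhdsGE_iff_exists_Icc_subset.mp (Metric.tendsto_nhds.mp hcont _ (half_pos hδ))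
    filter_upwards [Ioc_mem_nhdsGT (lt_min hau (by linarith : a < a + ε))] with x hx
    refine ⟨hx.2.trans (min_le_right _ _), fun y hy => (hu ⟨hy.1.le, ?_⟩).le⟩
    exact hy.2.trans (hx.2.trans (min_le_left _ _))
  filter_upwards [hnear, self_mem_nhdsWithin] with x ⟨hxε, hfx⟩ (hax : a < x)
  have hmass : 0 < (x - a) ^ lam / lam := div_pos (Real.rpow_pos_of_pos (sub_pos.2 hax) _) hlam
  have hK := intervalIntegrable_sub_rpow_sub_one hlam a x
  have hfM : ∀ y ∈ Ioc a x, ‖f y‖ ≤ |f a| + δ / 2 := fun y hy => by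
    rw [Real.norm_eq_abs]
    linarith [abs_sub_abs_le_abs_sub (f y) (f a), hfx y hy]
  have hKf := hK.mul_of_norm_le hax.le (hint.mono_set (Ioc_subset_Icc_self.trans
    (Icc_subset_Icc_right hxε))) hfM
  have hest := abs_integral_mul_sub_le hax.le hK hKf
    (fun y hy => Real.rpow_nonneg (sub_nonneg.2 hy.2) _) hfx
  rw [integral_sub_rpow_sub_one hlam] at hest
  rw [Real.dist_eq, div_sub' hmass.ne', abs_div, abs_of_pos hmass, div_lt_iff₀ hmass, mul_comm]
  linarith [mul_lt_mul_of_pos_right (half_lt_self hδ) hmass]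

/-- **Asymptotics of the Riemann–Liouville integral at the base point.**
If `λ > 0` and `f` is Lebesgue integrable on `[a, a+ε]` for some `ε > 0` and
right-continuous at `a`, then
`Γ(λ+1) · (I_a^λ f)(x) / (x−a)^λ → f(a)` as `x → a⁺`, and in particular
`(I_a^λ f)(x) → 0` as `x → a⁺`. -/
theorem riemannLiouville_integral_tendsto_base (a lam ε : ℝ) (f : ℝ → ℝ)
    (hlam : 0 < lam) (hε : 0 < ε)
    (hint : IntegrableOn f (Set.Icc a (a + ε)))
    (hcont : ContinuousWithinAt f (Set.Ici a) a) :
    Tendsto (fun x =>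
        Real.Gamma (lam + 1) *
          ((1 / Real.Gamma lam) * ∫ y in a..x, (x - y) ^ (lam - 1) * f y) / (x - a) ^ lam)
      (nhdsWithin a (Set.Ioi a)) (nhds (f a)) ∧
    Tendsto (fun x => (1 / Real.Gamma lam) * ∫ y in a..x, (x - y) ^ (lam - 1) * f y)
      (nhdsWithin a (Set.Ioi a)) (nhds 0) := by
  have hnormalized := (tendsto_integral_sub_rpow_mul_div hlam hε hint hcont).congr'
    (f₂ := fun x => Real.Gamma (lam + 1) *
      ((1 / Real.Gamma lam) * ∫ y in a..x, (x - y) ^ (lam - 1) * f y) / (x - a) ^ lam) <| by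
    filter_upwards [self_mem_nhdsWithin] with x (hax : a < x)
    have := (Real.rpow_pos_of_pos (sub_pos.2 hax) lam).ne'
    rw [Real.Gamma_add_one hlam.ne']
    field_simp
  refine ⟨hnormalized, ?_⟩
  have hpow : Tendsto (fun x => (x - a) ^ lam) (𝓝[>] a) (𝓝 0) :=
    (((continuous_sub_right a).rpow_const fun _ => Or.inr hlam.le).tendsto' a 0
      (by simp [hlam.ne'])).mono_left nhdsWithin_le_nhds
  have hlim := (hnormalized.mul hpow).div_const (Real.Gamma (lam + 1))
  rw [mul_zero, zero_div] at hlim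
  refine hlim.congr' ?_
  filter_upwards [self_mem_nhdsWithin] with x (hax : a < x)
  have := (Real.rpow_pos_of_pos (sub_pos.2 hax) lam).ne'
  have := (Real.Gamma_pos_of_pos (by linarith : 0 < lam + 1)).ne'
  field_simp
end

section
/- For every p with 0 < p ≤ 1 and all reals a ≥ 0 and b ≥ 0, the functions t ↦ t^{−a}(1+t^p)^{−b} and t ↦ t^{−a}(1+t^{−p})^{b} are completely monotonic on (0,∞). -/
/-- A function `f : ℝ → ℝ` is completely monotonic on `(0, ∞)` if it is infinitely
differentiable there and `(−1)^n f^(n)(t) ≥ 0` for every `t > 0` and every `n ≥ 0`. -/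
def CompletelyMonotonicOn (f : ℝ → ℝ) : Prop :=
  ContDiffOn ℝ (⊤ : ℕ∞) f (Set.Ioi 0) ∧
    ∀ (n : ℕ), ∀ t > (0 : ℝ), 0 ≤ (-1 : ℝ) ^ n * iteratedDeriv n f t

namespace CMProof

open Set Filter Finset Topology

/-- Bernstein function on `(0,∞)`: positive with completely monotone derivative. -/
def Bern (g : ℝ → ℝ) : Prop :=
  ContDiffOn ℝ (⊤ : ℕ∞) g (Set.Ioi 0) ∧ (∀ t > (0 : ℝ), 0 < g t) ∧
    ∀ (n : ℕ), ∀ t > (0 : ℝ), 0 ≤ (-1 : ℝ) ^ n * iteratedDeriv (n + 1) g t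

lemma iteratedDeriv_congr_ev {f g : ℝ → ℝ} {x : ℝ} (h : f =ᶠ[𝓝 x] g) (n : ℕ) :
    iteratedDeriv n f =ᶠ[𝓝 x] iteratedDeriv n g := by
  induction n with
  | zero => simpa [iteratedDeriv_zero] using h
  | succ n ih => simpa only [iteratedDeriv_succ] using ih.deriv

lemma contDiffOn_iteratedDeriv {f : ℝ → ℝ} {s : Set ℝ} (hs : IsOpen s)
    (hf : ContDiffOn ℝ (⊤ : ℕ∞) f s) (n : ℕ) : ContDiffOn ℝ (⊤ : ℕ∞) (iteratedDeriv n f) s := by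
  induction n with
  | zero => simpa [iteratedDeriv_zero] using hf
  | succ n ih =>
    rw [iteratedDeriv_succ]
    exact ih.deriv_of_isOpen hs (by simp)

lemma diffAt_iteratedDeriv {f : ℝ → ℝ} {s : Set ℝ} (hs : IsOpen s)
    (hf : ContDiffOn ℝ (⊤ : ℕ∞) f s) (n : ℕ) {t : ℝ} (ht : t ∈ s) :
    DifferentiableAt ℝ (iteratedDeriv n f) t :=
  (((contDiffOn_iteratedDeriv hs hf n).differentiableOn (by simp)) t ht).differentiableAt
    (hs.mem_nhds ht)

lemma pascal_sum (F G : ℕ → ℝ) (n : ℕ) :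
    ∑ k ∈ Finset.range (n + 1),
        (n.choose k : ℝ) * (F (k + 1) * G (n - k) + F k * G (n - k + 1))
      = ∑ k ∈ Finset.range (n + 2), ((n + 1).choose k : ℝ) * (F k * G (n + 1 - k)) := by
  have hsplit : ∀ k ∈ Finset.range (n + 1),
      (n.choose k : ℝ) * (F (k + 1) * G (n - k) + F k * G (n - k + 1))
        = (n.choose k : ℝ) * (F (k + 1) * G (n - k))
            + (n.choose k : ℝ) * (F k * G (n + 1 - k)) := by
    intro k hk
    rw [Finset.mem_range] at hk
    have h : n - k + 1 = n + 1 - k := by omega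
    rw [h]; ring
  rw [Finset.sum_congr rfl hsplit, Finset.sum_add_distrib]
  rw [Finset.sum_range_succ' (fun k => ((n + 1).choose k : ℝ) * (F k * G (n + 1 - k))) (n + 1)]
  rw [Finset.sum_range_succ' (fun k => (n.choose k : ℝ) * (F k * G (n + 1 - k))) n]
  have e1 : ∀ i : ℕ, n + 1 - (i + 1) = n - i := fun i => by omega
  simp only [e1, Nat.sub_zero, Nat.choose_zero_right, Nat.cast_one, one_mul]
  have e2 : ∑ i ∈ Finset.range (n + 1), ((n + 1).choose (i + 1) : ℝ) * (F (i + 1) * G (n - i))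
      = ∑ i ∈ Finset.range (n + 1), ((n.choose i : ℝ) * (F (i + 1) * G (n - i))
          + (n.choose (i + 1) : ℝ) * (F (i + 1) * G (n - i))) := by
    refine Finset.sum_congr rfl fun i _ => ?_
    rw [Nat.choose_succ_succ, Nat.cast_add]; ring
  rw [e2, Finset.sum_add_distrib]
  have e3 : ∑ i ∈ Finset.range (n + 1), (n.choose (i + 1) : ℝ) * (F (i + 1) * G (n - i))
      = ∑ i ∈ Finset.range n, (n.choose (i + 1) : ℝ) * (F (i + 1) * G (n - i)) := by
    rw [Finset.sum_range_succ, Nat.choose_succ_self, Nat.cast_zero, zero_mul, add_zero]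
  rw [e3]; ring

lemma iteratedDeriv_mul_on {f g : ℝ → ℝ} {s : Set ℝ} (hs : IsOpen s)
    (hf : ContDiffOn ℝ (⊤ : ℕ∞) f s) (hg : ContDiffOn ℝ (⊤ : ℕ∞) g s) (n : ℕ) :
    ∀ t ∈ s, iteratedDeriv n (fun x => f x * g x) t
      = ∑ k ∈ Finset.range (n + 1),
          (n.choose k : ℝ) * (iteratedDeriv k f t * iteratedDeriv (n - k) g t) := by
  induction n with
  | zero => intro t _; simp [iteratedDeriv_zero]
  | succ n ih =>
    intro t ht
    rw [iteratedDeriv_succ]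
    have hev : iteratedDeriv n (fun x => f x * g x) =ᶠ[𝓝 t]
        fun u => ∑ k ∈ Finset.range (n + 1),
          (n.choose k : ℝ) * (iteratedDeriv k f u * iteratedDeriv (n - k) g u) :=
      eventually_of_mem (hs.mem_nhds ht) (fun u hu => ih u hu)
    rw [hev.deriv_eq]
    have hterm : ∀ k ∈ Finset.range (n + 1),
        HasDerivAt (fun u => (n.choose k : ℝ) * (iteratedDeriv k f u * iteratedDeriv (n - k) g u))
          ((n.choose k : ℝ) * (iteratedDeriv (k + 1) f t * iteratedDeriv (n - k) g t
            + iteratedDeriv k f t * iteratedDeriv (n - k + 1) g t)) t := by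
      intro k _
      have h1 : HasDerivAt (iteratedDeriv k f) (iteratedDeriv (k + 1) f t) t := by
        rw [iteratedDeriv_succ]
        exact (diffAt_iteratedDeriv hs hf k ht).hasDerivAt
      have h2 : HasDerivAt (iteratedDeriv (n - k) g) (iteratedDeriv (n - k + 1) g t) t := by
        rw [iteratedDeriv_succ]
        exact (diffAt_iteratedDeriv hs hg (n - k) ht).hasDerivAt
      exact (h1.mul h2).const_mul _
    rw [(HasDerivAt.fun_sum hterm).deriv]
    exact pascal_sum (fun k => iteratedDeriv k f t) (fun k => iteratedDeriv k g t) n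

lemma CM_mul {f g : ℝ → ℝ} (hf : CompletelyMonotonicOn f) (hg : CompletelyMonotonicOn g) :
    CompletelyMonotonicOn (fun x => f x * g x) := by
  refine ⟨hf.1.mul hg.1, ?_⟩
  intro n t ht
  rw [iteratedDeriv_mul_on isOpen_Ioi hf.1 hg.1 n t ht, Finset.mul_sum]
  refine Finset.sum_nonneg fun k hk => ?_
  rw [Finset.mem_range] at hk
  have h1 := hf.2 k t ht
  have h2 := hg.2 (n - k) t ht
  have hsgn : (-1 : ℝ) ^ n = (-1 : ℝ) ^ k * (-1 : ℝ) ^ (n - k) := by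
    rw [← pow_add]; congr 1; omega
  have key : (-1 : ℝ) ^ n * ((n.choose k : ℝ)
        * (iteratedDeriv k f t * iteratedDeriv (n - k) g t))
      = (n.choose k : ℝ) * (((-1 : ℝ) ^ k * iteratedDeriv k f t)
          * ((-1 : ℝ) ^ (n - k) * iteratedDeriv (n - k) g t)) := by
    rw [hsgn]; ring
  rw [key]
  exact mul_nonneg (Nat.cast_nonneg _) (mul_nonneg h1 h2)

lemma CM_congr {f g : ℝ → ℝ} (hf : CompletelyMonotonicOn f) (h : Set.EqOn f g (Set.Ioi 0)) :
    CompletelyMonotonicOn g := by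
  refine ⟨(hf.1.congr h.symm), ?_⟩
  intro n t ht
  have hev : g =ᶠ[𝓝 t] f :=
    eventually_of_mem (isOpen_Ioi.mem_nhds ht) fun u hu => (h hu).symm
  rw [(iteratedDeriv_congr_ev hev n).self_of_nhds]
  exact hf.2 n t ht

lemma comp_sign (n : ℕ) : ∀ (f g : ℝ → ℝ), CompletelyMonotonicOn f → Bern g →
    ∀ t, 0 < t → 0 ≤ (-1 : ℝ) ^ n * iteratedDeriv n (fun x => f (g x)) t := by
  induction n using Nat.strong_induction_on with
  | _ n ih =>
    intro f g hf hg t ht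
    match n with
    | 0 =>
      simpa [iteratedDeriv_zero] using hf.2 0 (g t) (hg.2.1 t ht)
    | (n + 1) =>
      have hmaps : Set.MapsTo g (Set.Ioi 0) (Set.Ioi 0) := fun u hu => hg.2.1 u hu
      have hfderiv : ContDiffOn ℝ (⊤ : ℕ∞) (deriv f) (Set.Ioi 0) :=
        hf.1.deriv_of_isOpen isOpen_Ioi (by simp)
      have hgderiv : ContDiffOn ℝ (⊤ : ℕ∞) (deriv g) (Set.Ioi 0) :=
        hg.1.deriv_of_isOpen isOpen_Ioi (by simp)
      have hF : ContDiffOn ℝ (⊤ : ℕ∞) (fun x => deriv f (g x)) (Set.Ioi 0) :=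
        hfderiv.comp hg.1 hmaps
      -- deriv of the composition on Ioi 0
      have hder : ∀ u ∈ Set.Ioi (0 : ℝ),
          deriv (fun x => f (g x)) u = deriv f (g u) * deriv g u := by
        intro u hu
        have hdf : DifferentiableAt ℝ f (g u) :=
          ((hf.1.differentiableOn (by simp)) _ (hmaps hu)).differentiableAt
            (isOpen_Ioi.mem_nhds (hmaps hu))
        have hdg : DifferentiableAt ℝ g u :=
          ((hg.1.differentiableOn (by simp)) _ hu).differentiableAt (isOpen_Ioi.mem_nhds hu)
        exact deriv_comp u hdf hdg
      have hev : deriv (fun x => f (g x)) =ᶠ[𝓝 t]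
          fun x => deriv f (g x) * deriv g x :=
        eventually_of_mem (isOpen_Ioi.mem_nhds ht) hder
      rw [iteratedDeriv_succ', (iteratedDeriv_congr_ev hev n).self_of_nhds]
      rw [iteratedDeriv_mul_on isOpen_Ioi hF hgderiv n t ht, Finset.mul_sum]
      refine Finset.sum_nonneg fun k hk => ?_
      rw [Finset.mem_range] at hk
      -- sign of iteratedDeriv k (deriv f ∘ g) via the inductive hypothesis
      have hCMnf : CompletelyMonotonicOn (fun y => -(deriv f y)) := by
        refine ⟨hfderiv.neg, ?_⟩
        intro m s hs
        rw [iteratedDeriv_fun_neg]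
        have := hf.2 (m + 1) s hs
        rw [iteratedDeriv_succ'] at this
        calc (0 : ℝ) ≤ (-1 : ℝ) ^ (m + 1) * iteratedDeriv m (deriv f) s := this
          _ = (-1 : ℝ) ^ m * -iteratedDeriv m (deriv f) s := by ring
      have hA := ih k (by omega) (fun y => -(deriv f y)) g hCMnf hg t ht
      have hAeq : iteratedDeriv k (fun x => -(deriv f (g x))) t
          = -iteratedDeriv k (fun x => deriv f (g x)) t := iteratedDeriv_fun_neg k _ t
      rw [hAeq] at hA
      -- sign of iteratedDeriv (n-k) (deriv g)
      have hB := hg.2.2 (n - k) t ht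
      rw [iteratedDeriv_succ'] at hB
      have hsgn : (-1 : ℝ) ^ (n + 1)
          = ((-1 : ℝ) ^ k * (-1 : ℝ) ^ (n - k)) * (-1 : ℝ) := by
        rw [← pow_add]
        have : k + (n - k) = n := by omega
        rw [this]; ring
      have key : (-1 : ℝ) ^ (n + 1) * ((n.choose k : ℝ)
            * (iteratedDeriv k (fun x => deriv f (g x)) t
                * iteratedDeriv (n - k) (deriv g) t))
          = (n.choose k : ℝ)
              * (((-1 : ℝ) ^ k * -iteratedDeriv k (fun x => deriv f (g x)) t)
                * ((-1 : ℝ) ^ (n - k) * iteratedDeriv (n - k) (deriv g) t)) := by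
        rw [hsgn]; ring
      rw [key]
      exact mul_nonneg (Nat.cast_nonneg _) (mul_nonneg hA hB)

lemma CM_comp {f g : ℝ → ℝ} (hf : CompletelyMonotonicOn f) (hg : Bern g) :
    CompletelyMonotonicOn (fun x => f (g x)) := by
  have hmaps : Set.MapsTo g (Set.Ioi 0) (Set.Ioi 0) := fun u hu => hg.2.1 u hu
  exact ⟨hf.1.comp hg.1 hmaps, fun n t ht => comp_sign n f g hf hg t ht⟩

lemma iteratedDeriv_shift_rpow (c d : ℝ) (n : ℕ) :
    ∀ x : ℝ, 0 < x + d → iteratedDeriv n (fun y : ℝ => (y + d) ^ c) x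
      = (∏ i ∈ Finset.range n, (c - i)) * (x + d) ^ (c - n) := by
  induction n with
  | zero => intro x _; simp [iteratedDeriv_zero]
  | succ n ih =>
    intro x hx
    rw [iteratedDeriv_succ]
    have hopen : IsOpen {y : ℝ | 0 < y + d} :=
      isOpen_lt continuous_const (continuous_id.add continuous_const)
    have hev : iteratedDeriv n (fun y : ℝ => (y + d) ^ c) =ᶠ[𝓝 x]
        fun y => (∏ i ∈ Finset.range n, (c - i)) * (y + d) ^ (c - n) :=
      eventually_of_mem (hopen.mem_nhds hx) fun y hy => ih y hy
    rw [hev.deriv_eq]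
    have hbase : HasDerivAt (fun y : ℝ => (y + d) ^ (c - n))
        (1 * (c - n) * (x + d) ^ (c - n - 1)) x :=
      ((hasDerivAt_id x).add_const d).rpow_const (Or.inl (ne_of_gt hx))
    rw [(hbase.const_mul (∏ i ∈ Finset.range n, (c - i))).deriv]
    rw [Finset.prod_range_succ]
    have hc : c - (n : ℝ) - 1 = c - ((n : ℕ) + 1 : ℕ) := by push_cast; ring
    rw [hc]; ring

lemma sign_prod (c : ℝ) (hc : c ≤ 0) (n : ℕ) :
    0 ≤ (-1 : ℝ) ^ n * ∏ i ∈ Finset.range n, (c - i) := by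
  induction n with
  | zero => simp
  | succ n ih =>
    have hn : 0 ≤ (n : ℝ) - c := sub_nonneg.2 (hc.trans (Nat.cast_nonneg n))
    calc (0 : ℝ) ≤ ((-1 : ℝ) ^ n * ∏ i ∈ Finset.range n, (c - i)) * ((n : ℝ) - c) :=
          mul_nonneg ih hn
      _ = (-1 : ℝ) ^ (n + 1) * ∏ i ∈ Finset.range (n + 1), (c - i) := by
          rw [Finset.prod_range_succ, pow_succ]; ring

lemma contDiffOn_shift_rpow (c d : ℝ) (hd : 0 ≤ d) :
    ContDiffOn ℝ (⊤ : ℕ∞) (fun y : ℝ => (y + d) ^ c) (Set.Ioi 0) := by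
  intro x hx
  have hx' : x + d ≠ 0 := ne_of_gt (by simp at hx; linarith)
  exact ((Real.contDiffAt_rpow_const_of_ne hx').comp x
    ((contDiffAt_id).add contDiffAt_const)).contDiffWithinAt

lemma CM_shift_rpow (c d : ℝ) (hc : c ≤ 0) (hd : 0 ≤ d) :
    CompletelyMonotonicOn (fun y : ℝ => (y + d) ^ c) := by
  refine ⟨contDiffOn_shift_rpow c d hd, ?_⟩
  intro n t ht
  rw [iteratedDeriv_shift_rpow c d n t (by linarith)]
  rw [← mul_assoc]
  exact mul_nonneg (sign_prod c hc n) (Real.rpow_nonneg (by linarith) _)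

lemma CM_rpow (c : ℝ) (hc : c ≤ 0) : CompletelyMonotonicOn (fun y : ℝ => y ^ c) := by
  have := CM_shift_rpow c 0 hc le_rfl
  simpa only [add_zero] using this

lemma Bern_rpow (p : ℝ) (hp0 : 0 < p) (hp1 : p ≤ 1) : Bern (fun y : ℝ => y ^ p) := by
  refine ⟨?_, fun t ht => Real.rpow_pos_of_pos ht p, ?_⟩
  · have := contDiffOn_shift_rpow p 0 le_rfl
    simpa only [add_zero] using this
  · intro n t ht
    have h := iteratedDeriv_shift_rpow p 0 (n + 1) t (by simpa using ht)
    simp only [add_zero] at h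
    rw [h]
    have hprod : ∏ i ∈ Finset.range (n + 1), (p - (i : ℕ))
        = (∏ i ∈ Finset.range n, ((p - 1) - (i : ℕ))) * p := by
      rw [Finset.prod_range_succ']
      congr 1
      · refine Finset.prod_congr rfl fun i _ => ?_
        push_cast; ring
      · simp
    rw [hprod]
    have h1 := sign_prod (p - 1) (by linarith) n
    have h2 : (0 : ℝ) ≤ t ^ (p - ((n : ℕ) + 1 : ℕ)) := Real.rpow_nonneg ht.le _
    calc (0 : ℝ) ≤ ((-1 : ℝ) ^ n * ∏ i ∈ Finset.range n, ((p - 1) - (i : ℕ))) * p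
          * t ^ (p - ((n : ℕ) + 1 : ℕ)) := by positivity
      _ = (-1 : ℝ) ^ n * ((∏ i ∈ Finset.range n, ((p - 1) - (i : ℕ))) * p
          * t ^ (p - ((n : ℕ) + 1 : ℕ))) := by ring

lemma Bern_ratio : Bern (fun x : ℝ => x / (x + 1)) := by
  have hder : ∀ u ∈ Set.Ioi (-1 : ℝ),
      deriv (fun x : ℝ => x / (x + 1)) u = (u + 1) ^ (-2 : ℝ) := by
    intro u hu
    have hu1 : u + 1 > 0 := by simp at hu; linarith
    have h := ((hasDerivAt_id u).div ((hasDerivAt_id u).add_const 1) (ne_of_gt hu1)).deriv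
    simp only [id_eq] at h
    rw [show (fun x : ℝ => x / (x + 1)) = (id / fun x => x + 1) from rfl, h]
    rw [show (-2 : ℝ) = ((-2 : ℤ) : ℝ) by norm_num, Real.rpow_intCast]
    field_simp
    norm_cast
    ring
  refine ⟨?_, fun t ht => div_pos ht (by linarith), ?_⟩
  · intro x hx
    have hx1 : x + 1 ≠ 0 := by simp at hx; positivity
    exact (contDiffAt_id.div ((contDiffAt_id).add contDiffAt_const) hx1).contDiffWithinAt
  · intro n t ht
    have hev : deriv (fun x : ℝ => x / (x + 1)) =ᶠ[𝓝 t] fun u => (u + 1) ^ (-2 : ℝ) :=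
      eventually_of_mem (isOpen_Ioi.mem_nhds (show t ∈ Set.Ioi (-1 : ℝ) by simp; linarith)) hder
    rw [iteratedDeriv_succ', (iteratedDeriv_congr_ev hev n).self_of_nhds]
    rw [iteratedDeriv_shift_rpow (-2) 1 n t (by linarith)]
    rw [← mul_assoc]
    exact mul_nonneg (sign_prod (-2) (by norm_num) n) (Real.rpow_nonneg (by linarith) _)

end CMProof

/-- For `0 < p ≤ 1`, `a ≥ 0`, `b ≥ 0`, the functions `t ↦ t^(−a)(1+t^p)^(−b)` and
`t ↦ t^(−a)(1+t^(−p))^b` are completely monotonic on `(0,∞)`. -/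
theorem completelyMonotonic_rpow_one_add_rpow (p a b : ℝ)
    (hp0 : 0 < p) (hp1 : p ≤ 1) (ha : 0 ≤ a) (hb : 0 ≤ b) :
    CompletelyMonotonicOn (fun t => t ^ (-a) * (1 + t ^ p) ^ (-b)) ∧
      CompletelyMonotonicOn (fun t => t ^ (-a) * (1 + t ^ (-p)) ^ b) := by
  open CMProof in
  have hCMa : CompletelyMonotonicOn (fun t : ℝ => t ^ (-a)) := CM_rpow (-a) (by linarith)
  have hg : Bern (fun t : ℝ => t ^ p) := Bern_rpow p hp0 hp1
  constructor
  · -- first function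
    have hf1 : CompletelyMonotonicOn (fun x : ℝ => (x + 1) ^ (-b)) :=
      CM_shift_rpow (-b) 1 (by linarith) zero_le_one
    have hcomp : CompletelyMonotonicOn (fun t : ℝ => (t ^ p + 1) ^ (-b)) :=
      CM_comp hf1 hg
    have hprod := CM_mul hCMa hcomp
    refine CM_congr hprod ?_
    intro t _
    simp only []
    rw [add_comm (t ^ p) 1]
  · -- second function
    have hψ : CompletelyMonotonicOn (fun y : ℝ => y ^ (-b)) := CM_rpow (-b) (by linarith)
    have hφ : Bern (fun x : ℝ => x / (x + 1)) := Bern_ratio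
    have h1 : CompletelyMonotonicOn (fun x : ℝ => (x / (x + 1)) ^ (-b)) := CM_comp hψ hφ
    have h2 : CompletelyMonotonicOn (fun t : ℝ => (t ^ p / (t ^ p + 1)) ^ (-b)) :=
      CM_comp h1 hg
    have hprod := CM_mul hCMa h2
    refine CM_congr hprod ?_
    intro t ht
    simp only []
    congr 1
    -- (t^p/(t^p+1))^(-b) = (1 + t^(-p))^b
    have htp : (0 : ℝ) < t ^ p := Real.rpow_pos_of_pos ht p
    have hquot : (0 : ℝ) < t ^ p / (t ^ p + 1) := div_pos htp (by linarith)
    rw [Real.rpow_neg hquot.le, ← Real.inv_rpow hquot.le]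
    congr 1
    rw [Real.rpow_neg (le_of_lt ht)]
    field_simp
end

section
/- Let p > 0, b > 0, λ ∈ ℝ, and let n be a nonnegative integer. Then for every real z, the n-th derivative of the function z ↦ E^λ_{p,b}(−z) equals (−1)^n (λ)_n E^{λ+n}_{p,b+pn}(−z), where (λ)_n = λ(λ+1)⋯(λ+n−1) is the rising factorial. -/
/-- The generalized Mittag-Leffler function
`E^λ_{p,b}(z) = Σ_{k=0}^∞ (λ)_k z^k / (Γ(pk+b) k!)`, where `(λ)_k` is the rising
factorial. -/
noncomputable def genMittagLeffler (p b lam z : ℝ) : ℝ :=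
  ∑' k : ℕ, (ascPochhammer ℝ k).eval lam * z ^ k /
    (Real.Gamma (p * k + b) * (Nat.factorial k : ℝ))

/-!
Write `E^λ_{p,b}(z) = Σ c_k z^k` with `c_k = (λ)_k / (Γ(pk+b) k!)`. Log-convexity of `Γ` gives
`Γ(x+p) ≥ Γ(x) (x-1)^p`, so `|c_{k+1}| ≤ (|λ|+1) (pk+b-1)^{-p} |c_k|` with a factor tending to `0`:
the series is entire and may be differentiated termwise. Since `(λ)_{k+1} = λ (λ+1)_k`, the
differentiated coefficients are `(k+1) c_{k+1} = λ c'_k` with `c'` the coefficients of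
`E^{λ+1}_{p,b+p}`, so `(E^λ_{p,b})' = λ E^{λ+1}_{p,b+p}`; induction on `n` with the chain rule for `z ↦ -z` finishes.
-/

open Filter Topology

theorem Real.Gamma_mul_rpow_le_Gamma_add {x q : ℝ} (hx : 1 < x) (hq : 0 < q) :
    Gamma x * (x - 1) ^ q ≤ Gamma (x + q) := by
  have hx₁ : 0 < x - 1 := sub_pos.2 hx
  have hΓx : 0 < Gamma x := Gamma_pos_of_pos (by linarith)
  -- slope of `log ∘ Γ` on `[x - 1, x]` ≤ slope on `[x, x + q]`, and the former is `log (x - 1)`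
  have hslope := convexOn_log_Gamma.slope_mono_adjacent (Set.mem_Ioi.2 hx₁)
    (Set.mem_Ioi.2 (by linarith : 0 < x + q)) (by linarith : x - 1 < x) (by linarith : x < x + q)
  have hlog : log (Gamma x) - log (Gamma (x - 1)) = log (x - 1) := by
    rw [sub_eq_iff_eq_add, ← log_mul hx₁.ne' (Gamma_pos_of_pos hx₁).ne', ← Gamma_add_one hx₁.ne',
      sub_add_cancel]
  simp only [Function.comp_apply, sub_sub_cancel, div_one, add_sub_cancel_left, hlog,
    le_div_iff₀ hq] at hslope
  rw [← log_le_log_iff (by positivity) (Gamma_pos_of_pos (by linarith)),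
    log_mul hΓx.ne' (by positivity), log_rpow hx₁]
  linarith

theorem summable_norm_mul_mul_pow_of_eventually_norm_succ_le {α : Type*}
    [SeminormedAddCommGroup α] {a : ℕ → α}
    (ha : ∀ ε > 0, ∀ᶠ k in atTop, ‖a (k + 1)‖ ≤ ε * ‖a k‖) (r : ℝ) :
    Summable fun k : ℕ => ‖a k‖ * k * r ^ k := by
  refine summable_of_ratio_norm_eventually_le (r := 1 / 2) (by norm_num) ?_
  filter_upwards [ha (1 / (4 * (|r| + 1))) (by positivity), eventually_ge_atTop 1]
    with k hak hk
  have hk' : (1 : ℝ) ≤ k := by exact_mod_cast hk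
  simp only [norm_mul, norm_pow, Real.norm_eq_abs, abs_norm, Nat.abs_cast]
  push_cast
  calc ‖a (k + 1)‖ * (k + 1) * |r| ^ (k + 1)
      ≤ 1 / (4 * (|r| + 1)) * ‖a k‖ * (2 * k) * (|r| ^ k * (|r| + 1)) := by
        rw [pow_succ]; gcongr <;> linarith [abs_nonneg r]
    _ = 1 / 2 * (‖a k‖ * k * |r| ^ k) := by field_simp; ring

theorem hasDerivAt_tsum_mul_pow {𝕜 : Type*} [RCLike 𝕜] {a : ℕ → 𝕜}
    (ha : ∀ r : ℝ, Summable fun k : ℕ => ‖a k‖ * k * r ^ k) (z : 𝕜) :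
    HasDerivAt (fun y => ∑' k, a k * y ^ k) (∑' k : ℕ, (k + 1) * a (k + 1) * z ^ k) z := by
  set R := ‖z‖ + 1
  have hR : 1 ≤ R := le_add_of_nonneg_left (norm_nonneg z)
  have hz : z ∈ Metric.ball (0 : 𝕜) R := by simp [R]
  have hbound : ∀ (k : ℕ), ∀ y ∈ Metric.ball (0 : 𝕜) R,
      ‖a k * (k * y ^ (k - 1))‖ ≤ ‖a k‖ * k * R ^ k := by
    intro k y hy
    rw [mem_ball_zero_iff] at hy
    rw [norm_mul, norm_mul, norm_pow, RCLike.norm_natCast, ← mul_assoc]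
    gcongr
    calc ‖y‖ ^ (k - 1) ≤ R ^ (k - 1) := by gcongr
      _ ≤ R ^ k := pow_le_pow_right₀ hR (Nat.sub_le k 1)
  have hsum₀ : Summable fun k => a k * (0 : 𝕜) ^ k :=
    (hasSum_single 0 fun k hk => by simp [hk]).summable
  have hderiv := hasDerivAt_tsum_of_isPreconnected (ha R) Metric.isOpen_ball
    (convex_ball (0 : 𝕜) R).isPreconnected (fun k y _ => (hasDerivAt_pow k y).const_mul (a k))
    hbound (Metric.mem_ball_self (by positivity)) hsum₀ hz
  have hshift : ∑' k : ℕ, a k * (k * z ^ (k - 1)) = ∑' k : ℕ, (k + 1) * a (k + 1) * z ^ k := by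
    rw [(Summable.of_norm_bounded (ha R) (hbound · z hz)).tsum_eq_zero_add]
    simp only [CharP.cast_eq_zero, zero_mul, mul_zero, zero_add]
    exact tsum_congr fun k => by push_cast; ring
  rwa [hshift] at hderiv

theorem ascPochhammer_succ_eval_left {S : Type*} [CommSemiring S] (n : ℕ) (x : S) :
    (ascPochhammer S (n + 1)).eval x = x * (ascPochhammer S n).eval (x + 1) := by
  simp [ascPochhammer_succ_left, Polynomial.eval_comp]

noncomputable def genMittagLefflerCoeff (p b lam : ℝ) (k : ℕ) : ℝ :=
  (ascPochhammer ℝ k).eval lam / (Real.Gamma (p * k + b) * k.factorial)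

theorem genMittagLeffler_eq_tsum (p b lam z : ℝ) :
    genMittagLeffler p b lam z = ∑' k, genMittagLefflerCoeff p b lam k * z ^ k :=
  tsum_congr fun _ => mul_div_right_comm _ _ _

theorem natCast_add_one_mul_genMittagLefflerCoeff_succ (p b lam : ℝ) (k : ℕ) :
    (k + 1) * genMittagLefflerCoeff p b lam (k + 1) =
      lam * genMittagLefflerCoeff p (b + p) (lam + 1) k := by
  have hk : (k : ℝ) + 1 ≠ 0 := by positivity
  simp only [genMittagLefflerCoeff, ascPochhammer_succ_eval_left, Nat.factorial_succ]
  rw [show p * ((k + 1 : ℕ) : ℝ) + b = p * k + (b + p) by push_cast; ring,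
    Nat.cast_mul, Nat.cast_succ]
  field_simp

theorem norm_genMittagLefflerCoeff_succ_le {p b : ℝ} (lam : ℝ) (hp : 0 < p) {k : ℕ}
    (hk : 1 < p * k + b) :
    ‖genMittagLefflerCoeff p b lam (k + 1)‖ ≤
      (|lam| + 1) * (p * k + b - 1) ^ (-p) * ‖genMittagLefflerCoeff p b lam k‖ := by
  have hΓx : 0 < Real.Gamma (p * k + b) := Real.Gamma_pos_of_pos (by linarith)
  have hΓxp : 0 < Real.Gamma (p * k + b + p) := Real.Gamma_pos_of_pos (by linarith)
  have hratio : genMittagLefflerCoeff p b lam (k + 1) =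
      genMittagLefflerCoeff p b lam k * ((lam + k) / (k + 1)) *
        (Real.Gamma (p * k + b) / Real.Gamma (p * k + b + p)) := by
    simp only [genMittagLefflerCoeff, ascPochhammer_succ_eval, Nat.factorial_succ]
    rw [show p * ((k + 1 : ℕ) : ℝ) + b = p * k + b + p by push_cast; ring,
      Nat.cast_mul, Nat.cast_succ]
    have hΓx_ne := hΓx.ne'
    generalize Real.Gamma (p * k + b) = G at hΓx_ne ⊢
    field_simp
  have hlam : |lam + k| / (k + 1) ≤ |lam| + 1 := by
    rw [div_le_iff₀ (by positivity)]
    calc |lam + k| ≤ |lam| + k := by simpa using abs_add_le lam k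
      _ ≤ (|lam| + 1) * (k + 1) := by nlinarith [abs_nonneg lam, k.cast_nonneg (α := ℝ)]
  have hΓ : Real.Gamma (p * k + b) / Real.Gamma (p * k + b + p) ≤ (p * k + b - 1) ^ (-p) := by
    rw [div_le_iff₀ hΓxp, Real.rpow_neg (by linarith), inv_mul_eq_div,
      le_div_iff₀ (by apply Real.rpow_pos_of_pos; linarith)]
    exact Real.Gamma_mul_rpow_le_Gamma_add hk hp
  rw [hratio]
  simp only [norm_mul, norm_div, Real.norm_eq_abs, abs_of_pos hΓx, abs_of_pos hΓxp,
    abs_of_pos (by positivity : (0:ℝ) < k + 1)]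
  calc _ ≤ |genMittagLefflerCoeff p b lam k| * (|lam| + 1) * (p * k + b - 1) ^ (-p) := by gcongr
    _ = _ := by ring

theorem summable_norm_genMittagLefflerCoeff_mul_pow {p : ℝ} (hp : 0 < p) (b lam r : ℝ) :
    Summable fun k : ℕ => ‖genMittagLefflerCoeff p b lam k‖ * k * r ^ k := by
  refine summable_norm_mul_mul_pow_of_eventually_norm_succ_le (fun ε hε => ?_) r
  have hx : Tendsto (fun k : ℕ => p * k + b - 1) atTop atTop :=
    tendsto_atTop_add_const_right _ _
      (tendsto_atTop_add_const_right _ _ (tendsto_natCast_atTop_atTop.const_mul_atTop hp))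
  have hdecay : Tendsto (fun k : ℕ => (|lam| + 1) * (p * k + b - 1) ^ (-p)) atTop (𝓝 0) := by
    simpa using ((tendsto_rpow_neg_atTop hp).comp hx).const_mul (|lam| + 1)
  filter_upwards [hx.eventually_gt_atTop 0, hdecay.eventually (ge_mem_nhds hε)] with k hk hdk
  exact (norm_genMittagLefflerCoeff_succ_le lam hp (by linarith)).trans (by gcongr)

theorem hasDerivAt_genMittagLeffler {p : ℝ} (hp : 0 < p) (b lam z : ℝ) :
    HasDerivAt (genMittagLeffler p b lam) (lam * genMittagLeffler p (b + p) (lam + 1) z) z := by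
  have h := hasDerivAt_tsum_mul_pow (summable_norm_genMittagLefflerCoeff_mul_pow hp b lam) z
  simp only [natCast_add_one_mul_genMittagLefflerCoeff_succ, mul_assoc, tsum_mul_left] at h
  rwa [funext (genMittagLeffler_eq_tsum p b lam), genMittagLeffler_eq_tsum]

theorem genMittagLeffler_iteratedDeriv_general (p b lam : ℝ) (hp : 0 < p)
    (n : ℕ) (z : ℝ) :
    iteratedDeriv n (fun z => genMittagLeffler p b lam (-z)) z
      = (-1 : ℝ) ^ n * (ascPochhammer ℝ n).eval lam *
          genMittagLeffler p (b + p * n) (lam + n) (-z) := by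
  revert z
  rw [← funext_iff]
  induction n with
  | zero => simp
  | succ n ih =>
    funext z
    rw [iteratedDeriv_succ, ih, deriv_const_mul_field, deriv_comp_neg,
      (hasDerivAt_genMittagLeffler hp _ _ _).deriv, ascPochhammer_succ_eval, Nat.cast_succ,
      mul_add_one p, ← add_assoc b, ← add_assoc lam]
    ring

/-- **Derivatives of the generalized Mittag-Leffler function.**
For `p > 0`, `b > 0`, real `λ`, and `n ≥ 0`, the `n`-th derivative of
`z ↦ E^λ_{p,b}(−z)` is `(−1)^n (λ)_n E^{λ+n}_{p,b+pn}(−z)`. -/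
theorem genMittagLeffler_iteratedDeriv (p b lam : ℝ) (hp : 0 < p) (hb : 0 < b)
    (n : ℕ) (z : ℝ) :
    iteratedDeriv n (fun z => genMittagLeffler p b lam (-z)) z
      = (-1 : ℝ) ^ n * (ascPochhammer ℝ n).eval lam *
          genMittagLeffler p (b + p * n) (lam + n) (-z) :=
  genMittagLeffler_iteratedDeriv_general p b lam hp n z
end

section
/- Let p > 0, b > 0, λ ∈ ℝ, and let w > 1. Then the Laplace transform ∫_0^∞ e^{−wt} t^{b−1} E^λ_{p,b}(−t^p) dt converges and equals w^{pλ−b} (1+w^p)^{−λ}, which also equals w^{−b} (1 + w^{−p})^{−λ}. -/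
/-!
Expanding `E^λ_{p,b}(-t^p)` termwise, the `k`-th term of the integrand is a multiple of
`t^(pk+b-1) e^(-wt)`, whose Laplace transform `Γ(pk+b) w^(-(pk+b))` cancels the Gamma factor of the
coefficient. What remains is `w^(-b) Σ (λ)_k / k! (-w^(-p))^k`, the binomial series of
`w^(-b) (1 + w^(-p))^(-λ)`. Since `w^(-p) < 1` it converges absolutely, which also justifies
exchanging sum and integral.
-/

open MeasureTheory

open Real Set Polynomial Nat

noncomputable def genMittagLefflerTerm (p b lam z : ℝ) (k : ℕ) : ℝ :=
  (ascPochhammer ℝ k).eval lam * z ^ k / (Gamma (p * k + b) * k !)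

theorem ascPochhammer_eval_div_factorial (a : ℝ) (n : ℕ) :
    (ascPochhammer ℝ n).eval a / n ! = Ring.choose (a + n - 1) n := by
  rw [← Ring.multichoose_eq, eq_comm, eq_div_iff (by positivity), mul_comm, ← nsmul_eq_mul,
    Ring.factorial_nsmul_multichoose_eq_ascPochhammer, ascPochhammer_smeval_eq_eval]

theorem hasSum_ascPochhammer_div_factorial_mul_pow (a : ℝ) {x : ℝ} (hx : |x| < 1) :
    HasSum (fun n => (ascPochhammer ℝ n).eval a / n ! * x ^ n) ((1 - x) ^ (-a)) := by
  have h := (one_div_one_sub_rpow_hasFPowerSeriesOnBall_zero a).hasSum (y := x)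
    (by simpa [enorm_eq_nnnorm, ← NNReal.coe_lt_coe] using hx)
  simpa [FormalMultilinearSeries.ofScalars_apply_eq, ascPochhammer_eval_div_factorial, mul_comm,
    rpow_neg (show 0 ≤ 1 - x by linarith [le_abs_self x])] using h

theorem abs_ascPochhammer_eval_le (a : ℝ) (n : ℕ) :
    |(ascPochhammer ℝ n).eval a| ≤ (ascPochhammer ℝ n).eval |a| := by
  induction n with
  | zero => simp
  | succ n ih =>
    simp only [ascPochhammer_succ_eval, abs_mul]
    gcongr
    · exact (abs_nonneg _).trans ih
    · exact (abs_add_le _ _).trans (by simp)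

theorem summable_abs_ascPochhammer_div_factorial_mul_pow (a : ℝ) {x : ℝ} (hx : |x| < 1) :
    Summable (fun n => |(ascPochhammer ℝ n).eval a / n ! * x ^ n|) := by
  refine (hasSum_ascPochhammer_div_factorial_mul_pow |a| (x := |x|) (by rwa [abs_abs])).summable
    |>.of_nonneg_of_le (fun n => abs_nonneg _) fun n => ?_
  rw [abs_mul, abs_div, abs_pow, Nat.abs_cast]
  gcongr
  exact abs_ascPochhammer_eval_le a n

theorem integrableOn_rpow_mul_exp_neg_mul_Ioi {s r : ℝ} (hs : 0 < s) (hr : 0 < r) :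
    IntegrableOn (fun t => t ^ (s - 1) * exp (-(r * t))) (Ioi 0) :=
  -- a non-integrable function would have integral `0`
  Integrable.of_integral_ne_zero <| by
    rw [integral_rpow_mul_exp_neg_mul_Ioi hs hr]
    exact (mul_pos (rpow_pos_of_pos (by positivity) s) (Gamma_pos_of_pos hs)).ne'

theorem one_div_rpow_mul_natCast_add {p b w : ℝ} (k : ℕ) (hw : 0 < w) :
    (1 / w) ^ (p * k + b) = w ^ (-b) * (w ^ (-p)) ^ k := by
  rw [one_div, inv_rpow hw.le, ← rpow_neg hw.le, ← rpow_mul_natCast hw.le, ← rpow_add hw]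
  ring_nf

section LaplaceTerm

variable {p b w : ℝ} (lam : ℝ) (k : ℕ)

theorem exp_mul_rpow_mul_genMittagLefflerTerm_eqOn :
    EqOn (fun t => exp (-w * t) * t ^ (b - 1) * genMittagLefflerTerm p b lam (-(t ^ p)) k)
      (fun t => (-1) ^ k * (ascPochhammer ℝ k).eval lam / (Gamma (p * k + b) * k !) *
        (t ^ (p * k + b - 1) * exp (-(w * t))))
      (Ioi 0) := by
  intro t ht
  have hpow : t ^ (p * k + b - 1) = (t ^ p) ^ k * t ^ (b - 1) := by
    rw [← rpow_mul_natCast ht.le, ← rpow_add ht]; ring_nf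
  simp only [genMittagLefflerTerm, hpow, neg_pow (t ^ p), neg_mul]
  ring

variable (hp : 0 ≤ p) (hb : 0 < b) (hw : 0 < w)
include hp hb hw

theorem integrableOn_exp_mul_rpow_mul_genMittagLefflerTerm :
    IntegrableOn (fun t => exp (-w * t) * t ^ (b - 1) * genMittagLefflerTerm p b lam (-(t ^ p)) k)
      (Ioi 0) :=
  IntegrableOn.congr_fun ((integrableOn_rpow_mul_exp_neg_mul_Ioi (by positivity) hw).const_mul _)
    (exp_mul_rpow_mul_genMittagLefflerTerm_eqOn lam k).symm measurableSet_Ioi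

theorem integral_exp_mul_rpow_mul_genMittagLefflerTerm :
    ∫ t in Ioi 0, exp (-w * t) * t ^ (b - 1) * genMittagLefflerTerm p b lam (-(t ^ p)) k
      = w ^ (-b) * ((ascPochhammer ℝ k).eval lam / k ! * (-w ^ (-p)) ^ k) := by
  have hΓ : Gamma (p * k + b) ≠ 0 := (Gamma_pos_of_pos (by positivity)).ne'
  rw [setIntegral_congr_fun measurableSet_Ioi (exp_mul_rpow_mul_genMittagLefflerTerm_eqOn lam k),
    integral_const_mul, integral_rpow_mul_exp_neg_mul_Ioi (by positivity) hw,
    one_div_rpow_mul_natCast_add k hw, neg_pow (w ^ (-p))]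
  field_simp

theorem integral_norm_exp_mul_rpow_mul_genMittagLefflerTerm :
    ∫ t in Ioi 0, ‖exp (-w * t) * t ^ (b - 1) * genMittagLefflerTerm p b lam (-(t ^ p)) k‖
      = w ^ (-b) * |(ascPochhammer ℝ k).eval lam / k ! * (-w ^ (-p)) ^ k| := by
  have hΓ : 0 < Gamma (p * k + b) := Gamma_pos_of_pos (by positivity)
  have hnorm : EqOn
      (fun t => ‖exp (-w * t) * t ^ (b - 1) * genMittagLefflerTerm p b lam (-(t ^ p)) k‖)
      (fun t => |(ascPochhammer ℝ k).eval lam| / (Gamma (p * k + b) * k !) *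
        (t ^ (p * k + b - 1) * exp (-(w * t)))) (Ioi 0) := by
    intro t ht
    simp only [exp_mul_rpow_mul_genMittagLefflerTerm_eqOn lam k ht, norm_eq_abs, abs_mul, abs_div,
      abs_pow, abs_neg, abs_one, one_pow, one_mul, abs_of_pos hΓ, Nat.abs_cast, abs_exp,
      abs_of_nonneg (rpow_nonneg (le_of_lt ht) _)]
  rw [setIntegral_congr_fun measurableSet_Ioi hnorm, integral_const_mul,
    integral_rpow_mul_exp_neg_mul_Ioi (by positivity) hw, one_div_rpow_mul_natCast_add k hw,
    abs_mul, abs_div, abs_pow, abs_neg, Nat.abs_cast, abs_of_pos (rpow_pos_of_pos hw _)]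
  field_simp

end LaplaceTerm

theorem rpow_sub_mul_one_add_rpow_rpow_neg {w : ℝ} (hw : 0 < w) (p b lam : ℝ) :
    w ^ (p * lam - b) * (1 + w ^ p) ^ (-lam) = w ^ (-b) * (1 + w ^ (-p)) ^ (-lam) := by
  have h : 1 + w ^ (-p) = w ^ (-p) * (1 + w ^ p) := by
    rw [mul_add, mul_one, ← rpow_add hw, neg_add_cancel, rpow_zero, add_comm]
  rw [h, mul_rpow (by positivity) (by positivity), ← rpow_mul hw.le, ← mul_assoc, ← rpow_add hw]
  ring_nf

/-- **Laplace transform of the generalized Mittag-Leffler function.**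
For `p > 0`, `b > 0`, real `λ`, and `w > 1`, the Laplace transform
`∫_0^∞ e^(−wt) t^(b−1) E^λ_{p,b}(−t^p) dt` converges and equals
`w^(pλ−b) (1+w^p)^(−λ) = w^(−b) (1+w^(−p))^(−λ)`. -/
theorem genMittagLeffler_laplace (p b lam w : ℝ) (hp : 0 < p) (hb : 0 < b)
    (hw : 1 < w) :
    IntegrableOn
        (fun t => Real.exp (-w * t) * t ^ (b - 1) * genMittagLeffler p b lam (-(t ^ p)))
        (Set.Ioi 0) ∧
      (∫ t in Set.Ioi (0 : ℝ),
          Real.exp (-w * t) * t ^ (b - 1) * genMittagLeffler p b lam (-(t ^ p)))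
        = w ^ (p * lam - b) * (1 + w ^ p) ^ (-lam) ∧
      w ^ (p * lam - b) * (1 + w ^ p) ^ (-lam)
        = w ^ (-b) * (1 + w ^ (-p)) ^ (-lam) := by
  have hw0 : 0 < w := one_pos.trans hw
  have hq : |-w ^ (-p)| < 1 := by
    rw [abs_neg, abs_of_pos (rpow_pos_of_pos hw0 _)]
    exact rpow_lt_one_of_one_lt_of_neg hw (neg_lt_zero.mpr hp)
  have hsum := hasSum_integral_of_summable_integral_norm (μ := volume.restrict (Ioi 0))
    (integrableOn_exp_mul_rpow_mul_genMittagLefflerTerm lam · hp.le hb hw0) <| by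
      simpa only [integral_norm_exp_mul_rpow_mul_genMittagLefflerTerm lam _ hp.le hb hw0]
        using (summable_abs_ascPochhammer_div_factorial_mul_pow lam hq).mul_left (w ^ (-b))
  simp only [integral_exp_mul_rpow_mul_genMittagLefflerTerm lam _ hp.le hb hw0] at hsum
  have hval : ∫ t in Ioi 0, exp (-w * t) * t ^ (b - 1) * genMittagLeffler p b lam (-(t ^ p))
      = w ^ (-b) * (1 + w ^ (-p)) ^ (-lam) := by
    simp only [genMittagLeffler, ← tsum_mul_left]
    refine hsum.unique ?_
    simpa using (hasSum_ascPochhammer_div_factorial_mul_pow lam hq).mul_left (w ^ (-b))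
  have halg := rpow_sub_mul_one_add_rpow_rpow_neg hw0 p b lam
  exact ⟨Integrable.of_integral_ne_zero (by rw [hval]; positivity), hval.trans halg.symm, halg⟩
end

section
/- Let 0 < p ≤ 1, b > 0, and λ ∈ ℝ with b ≥ pλ. Then E^λ_{p,b}(−z) ≥ 0 for every z > 0. -/
open Real Filter Topology Set

lemma hasSum_choose_mul_pow (a : ℝ) {x : ℝ} (hx : |x| < 1) :
    HasSum (fun k => Ring.choose a k * x ^ k) ((1 + x) ^ a) := by
  have := (one_add_rpow_hasFPowerSeriesOnBall_zero (a := a)).hasSum (y := x)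
    (by simpa [edist_dist] using hx)
  simpa [binomialSeries, FormalMultilinearSeries.ofScalars] using this

lemma exists_abs_choose_mul_pow_le (a : ℝ) {r : ℝ} (hr0 : 0 ≤ r) (hr1 : r < 1) :
    ∃ C, ∀ k, |Ring.choose a k| * r ^ k ≤ C := by
  have hsum := hasSum_choose_mul_pow a (x := r) (by rwa [abs_of_nonneg hr0])
  obtain ⟨C, hC⟩ := hsum.summable.tendsto_atTop_zero.abs.bddAbove_range
  exact ⟨C, fun k => by simpa [abs_mul, abs_of_nonneg (pow_nonneg hr0 k)] using hC ⟨k, rfl⟩⟩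

lemma ascPochhammer_eval_mul_neg_one_pow_div_factorial (lam : ℝ) (k : ℕ) :
    (ascPochhammer ℝ k).eval lam * (-1) ^ k / (k.factorial : ℝ) = Ring.choose (-lam) k := by
  rw [Ring.choose_eq_smul, Polynomial.descPochhammer_smeval_eq_ascPochhammer,
    Polynomial.ascPochhammer_smeval_eq_eval, smul_eq_mul, ← descPochhammer_eval_eq_ascPochhammer,
    ← neg_neg lam, ascPochhammer_eval_neg_eq_descPochhammer, neg_neg, mul_right_comm,
    ← pow_add, Even.neg_one_pow ⟨k, rfl⟩]
  ring

lemma genMittagLeffler_neg_eq_tsum (p b lam z : ℝ) :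
    genMittagLeffler p b lam (-z) = ∑' k : ℕ, Ring.choose (-lam) k * z ^ k / Gamma (p * k + b) := by
  refine tsum_congr fun k => ?_
  rw [← ascPochhammer_eval_mul_neg_one_pow_div_factorial, neg_pow]
  ring

namespace Real

variable {x y : ℝ}

lemma log_Gamma_add_one (hx : 0 < x) : log (Gamma (x + 1)) = log (Gamma x) + log x := by
  rw [Gamma_add_one hx.ne', log_mul hx.ne' (Gamma_pos_of_pos hx).ne', add_comm]

lemma log_Gamma_mul_rpow (hx : 0 < x) {u : ℝ} (hu : 0 < u) :
    log (Gamma x * u ^ y) = log (Gamma x) + y * log u := by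
  rw [log_mul (Gamma_pos_of_pos hx).ne' (rpow_pos_of_pos hu y).ne', log_rpow hu]

lemma Gamma_add_le_Gamma_mul_rpow (hx : 0 < x) (hy : 0 ≤ y) (hy1 : y ≤ 1) :
    Gamma (x + y) ≤ Gamma x * x ^ y := by
  rcases hy.eq_or_lt with rfl | hy
  · simp
  have hslope := convexOn_log_Gamma.secant_mono (a := x) (x := x + y) (y := x + 1) hx
    (mem_Ioi.2 (by linarith)) (mem_Ioi.2 (by linarith)) (by linarith)
    (by linarith) (by linarith)
  simp only [Function.comp_apply, add_sub_cancel_left, div_one, log_Gamma_add_one hx,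
    div_le_iff₀ hy] at hslope
  rw [← log_le_log_iff (Gamma_pos_of_pos (by linarith)) (by positivity [Gamma_pos_of_pos hx]),
    log_Gamma_mul_rpow hx hx]
  linarith

lemma Gamma_mul_rpow_le_Gamma_add_s11 (hx : 0 < x) (hy : 1 ≤ y) :
    Gamma x * x ^ y ≤ Gamma (x + y) := by
  have hslope := convexOn_log_Gamma.secant_mono (a := x) (x := x + 1) (y := x + y) hx
    (mem_Ioi.2 (by linarith)) (mem_Ioi.2 (by linarith)) (by linarith)
    (by linarith) (by linarith)
  simp only [Function.comp_apply, add_sub_cancel_left, div_one, log_Gamma_add_one hx,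
    le_div_iff₀ (by linarith : 0 < y)] at hslope
  rw [← log_le_log_iff (by positivity [Gamma_pos_of_pos hx]) (Gamma_pos_of_pos (by linarith)),
    log_Gamma_mul_rpow hx hx]
  linarith

lemma Gamma_add_le_Gamma_mul_add_rpow (hx : 0 < x) (hy : 0 ≤ y) :
    Gamma (x + y) ≤ Gamma x * (x + y) ^ y := by
  rcases hy.eq_or_lt with rfl | hy
  · simp
  have hslope := convexOn_log_Gamma.slope_mono_adjacent (x := x) (y := x + y) (z := x + y + 1)
    hx (mem_Ioi.2 (by linarith)) (by linarith) (by linarith)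
  simp only [Function.comp_apply, add_sub_cancel_left, div_one,
    log_Gamma_add_one (by linarith : 0 < x + y), div_le_iff₀ hy] at hslope
  rw [← log_le_log_iff (Gamma_pos_of_pos (by linarith)) (by positivity [Gamma_pos_of_pos hx]),
    log_Gamma_mul_rpow hx (by linarith)]
  linarith

lemma Gamma_mul_sub_one_rpow_le_Gamma_add (hx : 1 < x) (hy : 0 ≤ y) :
    Gamma x * (x - 1) ^ y ≤ Gamma (x + y) := by
  rcases hy.eq_or_lt with rfl | hy
  · simp
  have hx1 : 0 < x - 1 := by linarith
  have hslope := convexOn_log_Gamma.slope_mono_adjacent (x := x - 1) (y := x) (z := x + y)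
    hx1 (mem_Ioi.2 (by linarith)) (by linarith) (by linarith)
  have hrec : log (Gamma x) - log (Gamma (x - 1)) = log (x - 1) := by
    have := log_Gamma_add_one hx1
    rw [sub_add_cancel] at this
    linarith
  simp only [Function.comp_apply, sub_sub_cancel, div_one, add_sub_cancel_left, hrec,
    le_div_iff₀ hy] at hslope
  rw [← log_le_log_iff (by positivity [Gamma_pos_of_pos (by linarith : 0 < x)])
    (Gamma_pos_of_pos (by linarith)), log_Gamma_mul_rpow (by linarith) hx1]
  linarith

lemma Gamma_add_nat_eq (hx : 0 < x) (n : ℕ) :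
    Gamma (x + n) = (ascPochhammer ℝ n).eval x * Gamma x := by
  induction n with
  | zero => simp
  | succ n ih =>
    rw [Nat.cast_succ, ← add_assoc, Gamma_add_one (by positivity), ih, ascPochhammer_succ_eval]
    ring

end Real

section GammaRatio

variable {x y : ℝ}

noncomputable def gammaRatio (x y : ℝ) : ℝ := Gamma (x + y) / (Gamma x * x ^ y)

lemma gammaRatio_pos (hx : 0 < x) (hy : 0 ≤ y) : 0 < gammaRatio x y := by
  have := Gamma_pos_of_pos hx
  have := Gamma_pos_of_pos (add_pos_of_pos_of_nonneg hx hy)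
  unfold gammaRatio
  positivity

lemma gammaRatio_le_one (hx : 0 < x) (hy : 0 ≤ y) (hy1 : y ≤ 1) : gammaRatio x y ≤ 1 :=
  div_le_one_of_le₀ (Gamma_add_le_Gamma_mul_rpow hx hy hy1)
    (by positivity [Gamma_pos_of_pos hx])

lemma one_le_gammaRatio (hx : 0 < x) (hy : 1 ≤ y) : 1 ≤ gammaRatio x y :=
  (one_le_div (by positivity [Gamma_pos_of_pos hx])).2 (Gamma_mul_rpow_le_Gamma_add_s11 hx hy)

lemma gammaRatio_add_one_le (hx : 0 < x) (hy : 1 ≤ y) : gammaRatio (x + 1) y ≤ gammaRatio x y := by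
  have hΓ := Gamma_pos_of_pos hx
  have hΓy := Gamma_pos_of_pos (by linarith : 0 < x + y)
  have hbern : 1 + y * x⁻¹ ≤ (1 + x⁻¹) ^ y :=
    one_add_mul_self_le_rpow_one_add (by linarith [inv_pos.2 hx]) hy
  have hsplit : (x + 1) ^ y = x ^ y * (1 + x⁻¹) ^ y := by
    rw [← mul_rpow hx.le (by positivity)]
    congr 1
    field_simp
  rw [gammaRatio, gammaRatio, add_right_comm, Gamma_add_one (by linarith), Gamma_add_one hx.ne',
    hsplit, div_le_div_iff₀ (by positivity) (by positivity)]
  have hxy : x + y ≤ x * (1 + x⁻¹) ^ y := by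
    calc x + y = x * (1 + y * x⁻¹) := by field_simp
      _ ≤ x * (1 + x⁻¹) ^ y := by gcongr
  calc (x + y) * Gamma (x + y) * (Gamma x * x ^ y)
      ≤ x * (1 + x⁻¹) ^ y * Gamma (x + y) * (Gamma x * x ^ y) := by gcongr
    _ = Gamma (x + y) * (x * Gamma x * (x ^ y * (1 + x⁻¹) ^ y)) := by ring

lemma tendsto_gammaRatio_atTop (hy : 0 ≤ y) :
    Tendsto (fun x => gammaRatio x y) atTop (𝓝 1) := by
  have hbase : ∀ c : ℝ, Tendsto (fun x : ℝ => ((x + c) / x) ^ y) atTop (𝓝 1) := by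
    intro c
    have h : Tendsto (fun x : ℝ => 1 + c * x⁻¹) atTop (𝓝 1) := by
      simpa using (tendsto_inv_atTop_zero.const_mul c).const_add 1
    have h' : Tendsto (fun x : ℝ => (x + c) / x) atTop (𝓝 1) := by
      refine h.congr' ?_
      filter_upwards [eventually_gt_atTop 0] with x hx
      field_simp
    simpa using h'.rpow_const (Or.inr hy)
  refine tendsto_of_tendsto_of_tendsto_of_le_of_le' (by simpa using hbase (-1)) (hbase y) ?_ ?_
  · filter_upwards [eventually_gt_atTop 1] with x hx
    have hx0 : 0 < x := by linarith
    rw [gammaRatio, le_div_iff₀ (by positivity [Gamma_pos_of_pos hx0]), div_rpow (by linarith)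
      hx0.le]
    calc ((x - 1) ^ y / x ^ y) * (Gamma x * x ^ y) = Gamma x * (x - 1) ^ y := by
          field_simp
      _ ≤ Gamma (x + y) := Gamma_mul_sub_one_rpow_le_Gamma_add hx hy
  · filter_upwards [eventually_gt_atTop 0] with x hx
    rw [gammaRatio, div_le_iff₀ (by positivity [Gamma_pos_of_pos hx]), div_rpow (by linarith)
      hx.le]
    calc Gamma (x + y) ≤ Gamma x * (x + y) ^ y := Gamma_add_le_Gamma_mul_add_rpow hx hy
      _ = (x + y) ^ y / x ^ y * (Gamma x * x ^ y) := by field_simp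

lemma gammaRatio_add_nat_le (hx : 0 < x) (hy : 0 ≤ y) (m : ℕ) :
    gammaRatio (x + m) y ≤ gammaRatio x y + 1 := by
  rcases le_total y 1 with hy1 | hy1
  · linarith [gammaRatio_le_one (by positivity : 0 < x + m) hy hy1, gammaRatio_pos hx hy]
  · suffices gammaRatio (x + m) y ≤ gammaRatio x y by linarith
    induction m with
    | zero => simp
    | succ m ih =>
      rw [Nat.cast_succ, ← add_assoc]
      exact (gammaRatio_add_one_le (by positivity) hy1).trans ih

end GammaRatio

/-- `f` has `n` successive derivatives on `U`, and `(-1) ^ n f⁽ⁿ⁾ ≥ 0` there. -/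
def NegDerivNonneg (U : Set ℝ) : ℕ → (ℝ → ℝ) → Prop
  | 0, f => ∀ s ∈ U, 0 ≤ f s
  | n + 1, f => ∃ g, (∀ s ∈ U, HasDerivAt f (-g s) s) ∧ NegDerivNonneg U n g

namespace NegDerivNonneg

variable {U : Set ℝ}

lemma mul_add_mul {n : ℕ} {c₁ c₂ : ℝ} {f₁ f₂ : ℝ → ℝ} (h₁ : NegDerivNonneg U n f₁)
    (h₂ : NegDerivNonneg U n f₂) (hc₁ : 0 ≤ c₁) (hc₂ : 0 ≤ c₂) :
    NegDerivNonneg U n (fun s => c₁ * f₁ s + c₂ * f₂ s) := by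
  induction n generalizing f₁ f₂ with
  | zero => exact fun s hs => by have := h₁ s hs; have := h₂ s hs; positivity
  | succ n ih =>
    obtain ⟨g₁, hd₁, hg₁⟩ := h₁
    obtain ⟨g₂, hd₂, hg₂⟩ := h₂
    refine ⟨fun s => c₁ * g₁ s + c₂ * g₂ s, fun s hs => ?_, ih hg₁ hg₂⟩
    exact (((hd₁ s hs).const_mul c₁).add ((hd₂ s hs).const_mul c₂)).congr_deriv (by ring)

lemma nonneg_of_hasDerivAt (hU : IsOpen U) {S : ℕ → ℝ → ℝ}
    (hS : ∀ j, ∀ s ∈ U, HasDerivAt (S j) (-S (j + 1) s) s) {n j : ℕ} {f : ℝ → ℝ}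
    (hf : NegDerivNonneg U n f) (hfS : EqOn f (S j) U) : ∀ s ∈ U, 0 ≤ S (j + n) s := by
  induction n generalizing j f with
  | zero => exact fun s hs => hfS hs ▸ hf s hs
  | succ n ih =>
    obtain ⟨g, hfg, hg⟩ := hf
    have hgS : EqOn g (S (j + 1)) U := fun s hs => neg_injective <| (hfg s hs).unique <|
      (hfS.eventuallyEq_of_mem (hU.mem_nhds hs)).hasDerivAt_iff.2 (hS j s hs)
    simpa only [add_right_comm j 1 n, add_assoc] using ih hg hgS

end NegDerivNonneg

section CompletelyMonotone

variable {p : ℝ}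

noncomputable def rpowMulOneAddRpow (p α δ s : ℝ) : ℝ := s ^ (-α) * (1 + s ^ p) ^ (-δ)

lemma rpowMulOneAddRpow_pos (α δ : ℝ) {s : ℝ} (hs : 0 < s) : 0 < rpowMulOneAddRpow p α δ s := by
  have := rpow_pos_of_pos hs p
  unfold rpowMulOneAddRpow
  positivity

/-- The derivative is written so that both coefficients are nonnegative when `α ≥ 0` and
`α + p δ ≥ 0`, even for negative `δ`. -/
lemma hasDerivAt_rpowMulOneAddRpow (α δ : ℝ) {s : ℝ} (hs : 0 < s) :
    HasDerivAt (rpowMulOneAddRpow p α δ)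
      (-(α * rpowMulOneAddRpow p (α + 1) (δ + 1) s +
        (α + p * δ) * rpowMulOneAddRpow p (α + 1 - p) (δ + 1) s)) s := by
  have hu : 0 < 1 + s ^ p := by linarith [rpow_pos_of_pos hs p]
  have h1 : HasDerivAt (fun t : ℝ => t ^ (-α)) (-α * s ^ (-α - 1)) s :=
    hasDerivAt_rpow_const (Or.inl hs.ne')
  have h2 : HasDerivAt (fun t : ℝ => (1 + t ^ p) ^ (-δ))
      (-δ * (1 + s ^ p) ^ (-δ - 1) * (p * s ^ (p - 1))) s :=
    (hasDerivAt_rpow_const (Or.inl hu.ne')).comp (h₂ := fun x => x ^ (-δ)) s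
      ((hasDerivAt_rpow_const (Or.inl hs.ne')).const_add 1)
  refine (h1.mul h2).congr_deriv ?_
  have eX : (1 + s ^ p) ^ (-δ) = (1 + s ^ p) ^ (-(δ + 1)) * (1 + s ^ p) := by
    rw [← rpow_add_one hu.ne']; ring_nf
  have eY : s ^ (-α) * s ^ (p - 1) = s ^ (-(α + 1 - p)) := by
    rw [← rpow_add hs]; ring_nf
  have eXY : s ^ (-(α + 1)) * s ^ p = s ^ (-(α + 1 - p)) := by
    rw [← rpow_add hs]; ring_nf
  unfold rpowMulOneAddRpow
  rw [show -α - 1 = -(α + 1) by ring, show -δ - 1 = -(δ + 1) by ring]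
  linear_combination (-(α * s ^ (-(α + 1)))) * eX - (α * (1 + s ^ p) ^ (-(δ + 1))) * eXY
    - (δ * p * (1 + s ^ p) ^ (-(δ + 1))) * eY

lemma negDerivNonneg_rpowMulOneAddRpow (hp0 : 0 ≤ p) (hp1 : p ≤ 1) {U : Set ℝ} (hU : U ⊆ Ioi 0)
    (n : ℕ) {α δ : ℝ} (hα : 0 ≤ α) (hαδ : 0 ≤ α + p * δ) :
    NegDerivNonneg U n (rpowMulOneAddRpow p α δ) := by
  induction n generalizing α δ with
  | zero => exact fun s hs => (rpowMulOneAddRpow_pos α δ (hU hs)).le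
  | succ n ih =>
    refine ⟨_, fun s hs => hasDerivAt_rpowMulOneAddRpow α δ (hU hs), ?_⟩
    exact (ih (by linarith) (by nlinarith)).mul_add_mul (ih (by linarith) (by linarith)) hα hαδ

end CompletelyMonotone

lemma ascPochhammer_eval_le_pow_mul {x y A : ℝ} (hx : 0 < x) (hA : 1 ≤ A) (hxy : x ≤ A * y)
    (n : ℕ) : (ascPochhammer ℝ n).eval x ≤ A ^ n * (ascPochhammer ℝ n).eval y := by
  have hy : 0 < y := pos_of_mul_pos_right (hx.trans_le hxy) (by linarith)
  induction n with
  | zero => simp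
  | succ n ih =>
    rw [ascPochhammer_succ_eval, ascPochhammer_succ_eval, pow_succ]
    have hxn : x + n ≤ A * (y + n) := by nlinarith [(Nat.cast_nonneg n : (0 : ℝ) ≤ n)]
    calc (ascPochhammer ℝ n).eval x * (x + n)
        ≤ (A ^ n * (ascPochhammer ℝ n).eval y) * (A * (y + n)) :=
          mul_le_mul ih hxn (by positivity) (by positivity [ascPochhammer_pos n y hy])
      _ = A ^ n * A * ((ascPochhammer ℝ n).eval y * (y + n)) := by ring

lemma rpow_neg_mul_add {s : ℝ} (hs : 0 < s) (p e : ℝ) (k : ℕ) :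
    s ^ (-(p * k + e)) = (s ^ (-p)) ^ k * s ^ (-e) := by
  rw [neg_add, rpow_add hs, neg_mul_eq_neg_mul, rpow_mul hs.le, rpow_natCast]

section NegDerivSeries

variable {p b : ℝ} {c : ℕ → ℝ}

variable (p b c) in
/-- `(-1) ^ n` times the `n`-th derivative of `s ↦ ∑ c k * s ^ (-(p * k + b))`. -/
noncomputable def negDerivSeries (n : ℕ) (s : ℝ) : ℝ :=
  ∑' k : ℕ, c k * (ascPochhammer ℝ n).eval (p * k + b) * s ^ (-(p * k + b + n))

lemma summable_abs_mul_ascPochhammer_mul_pow (hp : 0 ≤ p) (hb : 0 < b) {r C : ℝ}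
    (hc : ∀ k, |c k| * r ^ k ≤ C) {t : ℝ} (ht : 0 ≤ t) (htr : t < r) (n : ℕ) :
    Summable (fun k : ℕ => |c k| * (ascPochhammer ℝ n).eval (p * k + b) * t ^ k) := by
  have hr : 0 < r := ht.trans_lt htr
  set A := p + b + 1
  have hgeom := (summable_descFactorial_mul_geometric_of_norm_lt_one n
    (r := t / r) (by rw [norm_div, Real.norm_of_nonneg ht, Real.norm_of_nonneg hr.le,
      div_lt_one hr]; exact htr)).mul_left (C * A ^ n)
  have hpos (k : ℕ) : 0 < (ascPochhammer ℝ n).eval (p * k + b) :=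
    ascPochhammer_pos n _ (by positivity)
  refine hgeom.of_nonneg_of_le (fun k => by have := hpos k; positivity) fun k => ?_
  have hpoch : (ascPochhammer ℝ n).eval (p * k + b) ≤ A ^ n * ((k + n).descFactorial n : ℝ) := by
    have := ascPochhammer_eval_le_pow_mul (x := p * k + b) (y := ((k + 1 : ℕ) : ℝ)) (A := A)
      (by positivity) (by linarith) (by push_cast; nlinarith [(Nat.cast_nonneg k : (0 : ℝ) ≤ k)]) n
    rwa [ascPochhammer_nat_eq_natCast_descFactorial, Nat.add_right_comm, Nat.add_sub_cancel] at this
  calc |c k| * (ascPochhammer ℝ n).eval (p * k + b) * t ^ k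
      = (|c k| * r ^ k) * (ascPochhammer ℝ n).eval (p * k + b) * (t / r) ^ k := by
        rw [div_pow]; field_simp
    _ ≤ C * (A ^ n * ((k + n).descFactorial n : ℝ)) * (t / r) ^ k := by
        have hC : 0 ≤ C := (by positivity : (0 : ℝ) ≤ |c 0| * r ^ 0).trans (hc 0)
        gcongr
        exacts [(hpos k).le, hc k]
    _ = C * A ^ n * (((k + n).descFactorial n : ℝ) * (t / r) ^ k) := by ring

lemma summable_negDerivSeries (hp : 0 ≤ p) (hb : 0 < b) {r C : ℝ} (hc : ∀ k, |c k| * r ^ k ≤ C)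
    (n : ℕ) {s : ℝ} (hs : 0 < s) (hsr : s ^ (-p) < r) :
    Summable (fun k : ℕ =>
      c k * (ascPochhammer ℝ n).eval (p * k + b) * s ^ (-(p * k + b + n))) := by
  refine Summable.of_norm (((summable_abs_mul_ascPochhammer_mul_pow hp hb hc
    (t := s ^ (-p)) (by positivity) hsr n).mul_left (s ^ (-(b + n)))).congr fun k => ?_)
  rw [Real.norm_eq_abs, abs_mul, abs_mul,
    abs_of_pos (ascPochhammer_pos n (p * k + b) (by positivity)),
    abs_of_pos (rpow_pos_of_pos hs _), add_assoc, rpow_neg_mul_add hs]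
  ring

lemma hasDerivAt_negDerivSeries (hp : 0 < p) (hb : 0 < b) {r C : ℝ}
    (hc : ∀ k, |c k| * r ^ k ≤ C) {T : ℝ} (hT : 0 < T) (hTr : T ^ (-p) ≤ r) (n : ℕ) {s : ℝ}
    (hs : T < s) : HasDerivAt (negDerivSeries p b c n) (-negDerivSeries p b c (n + 1) s) s := by
  set t₀ := (T + s) / 2
  have ht₀ : 0 < t₀ := by simp only [t₀]; linarith
  have hst₀ : s ∈ Ioi t₀ := by simp only [mem_Ioi, t₀]; linarith
  have ht₀r : t₀ ^ (-p) < r :=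
    (rpow_lt_rpow_of_neg hT (by simp only [t₀]; linarith) (by linarith)).trans_le hTr
  have hpos (m k : ℕ) : 0 < (ascPochhammer ℝ m).eval (p * k + b) :=
    ascPochhammer_pos m _ (by positivity)
  have key := hasDerivAt_tsum_of_isPreconnected
    (u := fun k => t₀ ^ (-(b + (n + 1 : ℕ))) *
      (|c k| * (ascPochhammer ℝ (n + 1)).eval (p * k + b) * (t₀ ^ (-p)) ^ k))
    (g := fun k y => c k * (ascPochhammer ℝ n).eval (p * k + b) * y ^ (-(p * k + b + n)))
    (g' := fun k y => -(c k * (ascPochhammer ℝ (n + 1)).eval (p * k + b) *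
      y ^ (-(p * k + b + (n + 1 : ℕ)))))
    ((summable_abs_mul_ascPochhammer_mul_pow hp.le hb hc (by positivity) ht₀r (n + 1)).mul_left _)
    isOpen_Ioi (convex_Ioi t₀).isPreconnected (fun k y hy => ?_) (fun k y hy => ?_) hst₀
    (summable_negDerivSeries hp.le hb hc n (ht₀.trans hst₀) ((rpow_lt_rpow_of_neg ht₀ hst₀
      (by linarith)).trans ht₀r)) hst₀
  · rw [tsum_neg] at key
    exact key
  · have hy : 0 < y := ht₀.trans hy
    refine ((hasDerivAt_rpow_const (Or.inl hy.ne')).const_mul _).congr_deriv ?_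
    rw [ascPochhammer_succ_eval, show -(p * k + b + n) - 1 = -(p * k + b + (n + 1 : ℕ)) by
      push_cast; ring]
    ring
  · have hy : t₀ < y := hy
    have hexp : -(p * k + b + (n + 1 : ℕ)) ≤ 0 := by
      have := (Nat.cast_nonneg (n + 1) : (0 : ℝ) ≤ (n + 1 : ℕ))
      linarith [mul_nonneg hp.le (Nat.cast_nonneg k : (0 : ℝ) ≤ k)]
    rw [norm_neg, norm_mul, norm_mul, Real.norm_eq_abs, Real.norm_of_nonneg (hpos _ _).le,
      Real.norm_of_nonneg (rpow_nonneg (ht₀.trans hy).le _)]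
    calc |c k| * (ascPochhammer ℝ (n + 1)).eval (p * k + b) * y ^ (-(p * k + b + (n + 1 : ℕ)))
        ≤ |c k| * (ascPochhammer ℝ (n + 1)).eval (p * k + b) *
          t₀ ^ (-(p * k + b + (n + 1 : ℕ))) :=
          mul_le_mul_of_nonneg_left (rpow_le_rpow_of_nonpos ht₀ hy.le hexp)
            (mul_nonneg (abs_nonneg _) (hpos _ _).le)
      _ = _ := by rw [add_assoc, rpow_neg_mul_add ht₀]; ring

end NegDerivSeries

lemma tendsto_div_add_natCast_rpow {p : ℝ} (hp : 0 < p) (b z : ℝ) :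
    Tendsto (fun n : ℕ => z / (b + n) ^ p) atTop (𝓝 0) :=
  tendsto_const_nhds.div_atTop <| (tendsto_rpow_atTop hp).comp <|
    tendsto_atTop_add_const_left _ b tendsto_natCast_atTop_atTop

section Limit

variable {p b : ℝ}

lemma mul_gammaRatio_eq (hp : 0 ≤ p) (hb : 0 < b) (a z : ℝ) (n k : ℕ) :
    a * z ^ k / Gamma (p * k + b) * gammaRatio (b + n) (p * k) =
      a * (ascPochhammer ℝ n).eval (p * k + b) * (z / (b + n) ^ p) ^ k / Gamma (b + n) := by
  have hpkb : 0 < p * k + b := by positivity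
  have hbn : 0 < b + n := by positivity
  rw [gammaRatio, add_comm (b + n), ← add_assoc, Real.Gamma_add_nat_eq hpkb, rpow_mul hbn.le,
    rpow_natCast, div_pow]
  have := Gamma_pos_of_pos hpkb
  have := Gamma_pos_of_pos hbn
  field_simp

lemma tendsto_tsum_mul_gammaRatio (hp : 0 < p) (hb : 0 < b) {c : ℕ → ℝ} {r C : ℝ} (hr : 0 < r)
    (hc : ∀ k, |c k| * r ^ k ≤ C) {z : ℝ} (hz : 0 ≤ z) :
    Tendsto (fun n : ℕ => ∑' k : ℕ, c k * z ^ k / Gamma (p * k + b) * gammaRatio (b + n) (p * k))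
      atTop (𝓝 (∑' k : ℕ, c k * z ^ k / Gamma (p * k + b))) := by
  set g := fun k : ℕ => c k * z ^ k / Gamma (p * k + b)
  have habs (k : ℕ) : |g k| = |c k| * z ^ k / Gamma (p * k + b) := by
    rw [abs_div, abs_mul, abs_pow, abs_of_nonneg hz, abs_of_pos (Gamma_pos_of_pos (by positivity))]
  obtain ⟨N, hN⟩ := ((tendsto_div_add_natCast_rpow hp b z).eventually_lt_const hr).exists
  have hsumN : Summable (fun k => |g k| * gammaRatio (b + N) (p * k)) :=
    ((summable_abs_mul_ascPochhammer_mul_pow hp.le hb hc (by positivity) hN N).div_const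
      (Gamma (b + N))).congr fun k => by rw [habs, mul_gammaRatio_eq hp.le hb]
  have hsum : Summable (fun k => |g k|) := by
    refine hsumN.of_norm_bounded_eventually_nat ?_
    filter_upwards [eventually_ge_atTop ⌈p⁻¹⌉₊] with k hk
    have hpk : 1 ≤ p * k := by
      rw [← div_le_iff₀' hp, one_div]; exact Nat.ceil_le.1 hk
    rw [norm_abs_eq_norm, Real.norm_eq_abs]
    exact le_mul_of_one_le_right (abs_nonneg _) (one_le_gammaRatio (by positivity) hpk)
  refine tendsto_tsum_of_dominated_convergence
    (bound := fun k => |g k| * (gammaRatio (b + N) (p * k) + 1))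
    ((hsumN.add hsum).congr fun k => by ring) (fun k => ?_) ?_
  · simpa using ((tendsto_gammaRatio_atTop (by positivity)).comp
      (tendsto_atTop_add_const_left _ b tendsto_natCast_atTop_atTop)).const_mul (g k)
  · filter_upwards [eventually_ge_atTop N] with n hn k
    obtain ⟨m, rfl⟩ := Nat.exists_eq_add_of_le hn
    rw [norm_mul, Real.norm_eq_abs, Real.norm_of_nonneg (gammaRatio_pos (by positivity)
      (by positivity)).le, Nat.cast_add, ← add_assoc]
    exact mul_le_mul_of_nonneg_left (gammaRatio_add_nat_le (by positivity) (by positivity) m)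
      (abs_nonneg _)

end Limit

section Choose

variable {p b lam : ℝ}

lemma negDerivSeries_choose_zero_eq (hp : 0 < p) {s : ℝ} (hs : 1 < s) :
    negDerivSeries p b (Ring.choose (-lam)) 0 s = rpowMulOneAddRpow p (b - p * lam) lam s := by
  have hs0 : 0 < s := by linarith
  have hx0 : 0 < s ^ (-p) := rpow_pos_of_pos hs0 _
  have hx1 : s ^ (-p) < 1 := rpow_lt_one_of_one_lt_of_neg hs (by linarith)
  have hsum := (hasSum_choose_mul_pow (-lam) (x := s ^ (-p))
    (by rwa [abs_of_pos hx0])).mul_right (s ^ (-b))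
  have hterm (k : ℕ) : Ring.choose (-lam) k * (ascPochhammer ℝ 0).eval (p * k + b) *
      s ^ (-(p * k + b + (0 : ℕ))) = Ring.choose (-lam) k * (s ^ (-p)) ^ k * s ^ (-b) := by
    rw [ascPochhammer_zero, Polynomial.eval_one, Nat.cast_zero, add_zero, rpow_neg_mul_add hs0]
    ring
  have hsplit : 1 + s ^ (-p) = s ^ (-p) * (1 + s ^ p) := by
    rw [mul_add, mul_one, ← rpow_add hs0, neg_add_cancel, rpow_zero, add_comm]
  rw [negDerivSeries, tsum_congr hterm, hsum.tsum_eq, rpowMulOneAddRpow, hsplit,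
    mul_rpow hx0.le (by positivity), ← rpow_mul hs0.le, mul_right_comm, ← rpow_add hs0]
  ring_nf

theorem negDerivSeries_choose_nonneg (hp0 : 0 < p) (hp1 : p ≤ 1) (hb : 0 < b) (hbl : p * lam ≤ b)
    (n : ℕ) {s : ℝ} (hs : 1 < s) : 0 ≤ negDerivSeries p b (Ring.choose (-lam)) n s := by
  set T := (1 + s) / 2
  have hT : 1 < T := by simp only [T]; linarith
  obtain ⟨C, hC⟩ := exists_abs_choose_mul_pow_le (-lam) (r := T ^ (-p)) (by positivity)
    (rpow_lt_one_of_one_lt_of_neg hT (by linarith))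
  have hH := negDerivNonneg_rpowMulOneAddRpow hp0.le hp1 (U := Ioi T)
    (fun x hx => (zero_lt_one.trans hT).trans hx) n (α := b - p * lam) (δ := lam)
    (by linarith) (by linarith)
  simpa using hH.nonneg_of_hasDerivAt isOpen_Ioi
    (fun j x hx => hasDerivAt_negDerivSeries hp0 hb hC (by linarith) le_rfl j hx) (j := 0)
    (fun x hx => (negDerivSeries_choose_zero_eq hp0 (hT.trans hx)).symm) s
    (mem_Ioi.2 (by simp only [T]; linarith))

theorem tsum_choose_mul_ascPochhammer_mul_pow_nonneg (hp0 : 0 < p) (hp1 : p ≤ 1) (hb : 0 < b)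
    (hbl : p * lam ≤ b) (n : ℕ) {t : ℝ} (ht0 : 0 < t) (ht1 : t < 1) :
    0 ≤ ∑' k : ℕ, Ring.choose (-lam) k * (ascPochhammer ℝ n).eval (p * k + b) * t ^ k := by
  set s := t ^ (-p⁻¹)
  have hs : 1 < s := one_lt_rpow_of_pos_of_lt_one_of_neg ht0 ht1 (by simpa using hp0)
  have hs0 : 0 < s := by linarith
  have ht : s ^ (-p) = t := by
    rw [← rpow_mul ht0.le, neg_mul_neg, inv_mul_cancel₀ hp0.ne', rpow_one]
  have hS := negDerivSeries_choose_nonneg (lam := lam) hp0 hp1 hb hbl n hs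
  have hsplit : negDerivSeries p b (Ring.choose (-lam)) n s = s ^ (-(b + n)) *
      ∑' k : ℕ, Ring.choose (-lam) k * (ascPochhammer ℝ n).eval (p * k + b) * t ^ k := by
    rw [negDerivSeries, ← tsum_mul_left]
    refine tsum_congr fun k => ?_
    rw [add_assoc, rpow_neg_mul_add hs0, ht]
    ring
  rw [hsplit] at hS
  exact nonneg_of_mul_nonneg_right hS (rpow_pos_of_pos hs0 _)

end Choose

/-- For `0 < p ≤ 1`, `b > 0`, and real `λ` with `b ≥ pλ`, one has
`E^λ_{p,b}(−z) ≥ 0` for every `z > 0`. -/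
theorem genMittagLeffler_nonneg (p b lam : ℝ) (hp0 : 0 < p) (hp1 : p ≤ 1)
    (hb : 0 < b) (hbl : p * lam ≤ b) :
    ∀ z > (0 : ℝ), 0 ≤ genMittagLeffler p b lam (-z) := by
  intro z hz
  obtain ⟨C, hC⟩ := exists_abs_choose_mul_pow_le (-lam) (r := 1 / 2) (by norm_num) (by norm_num)
  rw [genMittagLeffler_neg_eq_tsum]
  refine ge_of_tendsto (tendsto_tsum_mul_gammaRatio hp0 hb (by norm_num) hC hz.le) ?_
  filter_upwards [(tendsto_div_add_natCast_rpow hp0 b z).eventually_lt_const one_pos] with n hn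
  simp_rw [mul_gammaRatio_eq hp0.le hb]
  rw [tsum_div_const]
  exact div_nonneg
    (tsum_choose_mul_ascPochhammer_mul_pow_nonneg hp0 hp1 hb hbl n (by positivity) hn)
    (Gamma_pos_of_pos (by positivity)).le
end

section
/- Let f : (0,∞) → ℝ be infinitely differentiable, let n be a nonnegative integer, and let T denote the operator sending a function g to the function x ↦ x² g′(x). Then for every x > 0, the n-fold application of T to the function x ↦ x f(x) satisfies T^n(x f(x)) = x^{n+1} · (d/dx)^n [x^n f(x)]. -/
open Set

private lemma iterDW_eq (u : ℝ → ℝ) (k : ℕ) {x : ℝ} (hx : x ∈ Ioi (0:ℝ)) :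
    iteratedDerivWithin k u (Ioi 0) x = iteratedDeriv k u x := by
  rw [iteratedDerivWithin, iteratedDeriv, iteratedFDerivWithin_of_isOpen k isOpen_Ioi hx]

private lemma diffAt_iter {u : ℝ → ℝ} (hu : ContDiffOn ℝ (⊤ : ℕ∞) u (Ioi 0)) (k : ℕ)
    {x : ℝ} (hx : 0 < x) : DifferentiableAt ℝ (iteratedDeriv k u) x := by
  have h1 : DifferentiableOn ℝ (iteratedDerivWithin k u (Ioi 0)) (Ioi 0) :=
    hu.differentiableOn_iteratedDerivWithin (by exact_mod_cast lt_top_iff_ne_top.2 (by simp))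
      (uniqueDiffOn_Ioi 0)
  have h2 : DifferentiableAt ℝ (iteratedDerivWithin k u (Ioi 0)) x :=
    (h1 x hx).differentiableAt (isOpen_Ioi.mem_nhds hx)
  exact h2.congr_of_eventuallyEq <|
    Filter.eventuallyEq_of_mem (isOpen_Ioi.mem_nhds hx) fun y hy => (iterDW_eq u k hy).symm

private lemma diffAt0 {u : ℝ → ℝ} (hu : ContDiffOn ℝ (⊤ : ℕ∞) u (Ioi 0)) {x : ℝ} (hx : 0 < x) :
    DifferentiableAt ℝ u x := by
  have := diffAt_iter hu 0 hx
  rwa [iteratedDeriv_zero] at this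

/-- Leibniz-type lemma: `(d/dx)^{n+1} (x u) = x u^{(n+1)} + (n+1) u^{(n)}` on `(0,∞)`. -/
private lemma lemA {u : ℝ → ℝ} (hu : ContDiffOn ℝ (⊤ : ℕ∞) u (Ioi 0)) (n : ℕ) :
    ∀ x : ℝ, 0 < x → iteratedDeriv (n + 1) (fun y => y * u y) x
      = x * iteratedDeriv (n + 1) u x + (n + 1) * iteratedDeriv n u x := by
  induction n with
  | zero =>
    intro x hx
    rw [iteratedDeriv_one, iteratedDeriv_one, iteratedDeriv_zero,
      deriv_fun_mul differentiableAt_fun_id (diffAt0 hu hx), deriv_id'']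
    ring
  | succ n ih =>
    intro x hx
    have heq : iteratedDeriv (n + 1) (fun y => y * u y)
        =ᶠ[nhds x] fun y => y * iteratedDeriv (n + 1) u y + (n + 1) * iteratedDeriv n u y :=
      Filter.eventuallyEq_of_mem (isOpen_Ioi.mem_nhds hx) fun y hy => ih y hy
    rw [iteratedDeriv_succ, heq.deriv_eq,
      deriv_fun_add ((differentiableAt_fun_id.fun_mul (diffAt_iter hu (n+1) hx)))
        ((diffAt_iter hu n hx).const_mul _),
      deriv_fun_mul differentiableAt_fun_id (diffAt_iter hu (n+1) hx), deriv_id'',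
      deriv_const_mul _ (diffAt_iter hu n hx), ← iteratedDeriv_succ, ← iteratedDeriv_succ]
    push_cast
    ring

/-- For a smooth `f` on `(0,∞)`, a nonnegative integer `n`, and the operator `T`
sending `g` to `x ↦ x² g′(x)`, one has `T^n(x f(x)) = x^(n+1) (d/dx)^n [x^n f(x)]`
for every `x > 0`. -/
theorem iterate_sq_mul_deriv_eq (f : ℝ → ℝ)
    (hf : ContDiffOn ℝ (⊤ : ℕ∞) f (Set.Ioi 0)) (n : ℕ) (x : ℝ) (hx : 0 < x) :
    ((fun g : ℝ → ℝ => fun y => y ^ 2 * deriv g y)^[n] (fun y => y * f y)) x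
      = x ^ (n + 1) * iteratedDeriv n (fun y => y ^ n * f y) x := by
  induction n generalizing x with
  | zero => simp
  | succ n ih =>
    have hu : ContDiffOn ℝ (⊤ : ℕ∞) (fun y => y ^ n * f y) (Ioi 0) :=
      (contDiff_id.pow n).contDiffOn.mul hf
    rw [Function.iterate_succ_apply']
    have heq : ((fun g : ℝ → ℝ => fun y => y ^ 2 * deriv g y)^[n] (fun y => y * f y))
        =ᶠ[nhds x] fun y => y ^ (n + 1) * iteratedDeriv n (fun z => z ^ n * f z) y :=
      Filter.eventuallyEq_of_mem (isOpen_Ioi.mem_nhds hx) fun y hy => ih y hy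
    have hd : deriv ((fun g : ℝ → ℝ => fun y => y ^ 2 * deriv g y)^[n] (fun y => y * f y)) x
        = (n + 1) * x ^ n * iteratedDeriv n (fun z => z ^ n * f z) x
          + x ^ (n + 1) * iteratedDeriv (n + 1) (fun z => z ^ n * f z) x := by
      rw [heq.deriv_eq, deriv_fun_mul (differentiableAt_fun_id.fun_pow _) (diffAt_iter hu n hx),
        deriv_pow_field, ← iteratedDeriv_succ]
      push_cast; ring
    have hmul : (fun y : ℝ => y ^ (n + 1) * f y) = fun y => y * (y ^ n * f y) := by
      funext y; ring
    rw [hd, hmul, lemA hu n x hx]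
    ring
end

section
/- Let f : (0,∞) → ℝ be infinitely differentiable, let n be a nonnegative integer, and write f_{(k)}(x) = (d/dx)^k [x^k f(x)]. Suppose f_{(n+1)}(x) ≥ 0 for all x > 0 and f_{(n)} has a finite limit as x → 0⁺. Then f_{(n)}(x) ≥ 0 for all x > 0. -/
open Filter Set

lemma itdw_eq_itd (h : ℝ → ℝ) (k : ℕ) {x : ℝ} (hx : x ∈ Set.Ioi (0:ℝ)) :
    iteratedDerivWithin k h (Set.Ioi 0) x = iteratedDeriv k h x := by
  rw [iteratedDerivWithin, iteratedDeriv, iteratedFDerivWithin_of_isOpen k isOpen_Ioi hx]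

lemma diff_itd (h : ℝ → ℝ) (hh : ContDiffOn ℝ (⊤ : ℕ∞) h (Set.Ioi 0)) (k : ℕ) {x : ℝ}
    (hx : x ∈ Set.Ioi (0:ℝ)) : DifferentiableAt ℝ (iteratedDeriv k h) x := by
  have hu : UniqueDiffOn ℝ (Set.Ioi (0:ℝ)) := isOpen_Ioi.uniqueDiffOn
  have hd : DifferentiableOn ℝ (iteratedDerivWithin k h (Set.Ioi 0)) (Set.Ioi 0) :=
    hh.differentiableOn_iteratedDerivWithin (by exact_mod_cast ENat.natCast_lt_top k) hu
  have hmem : Set.Ioi (0:ℝ) ∈ nhds x := isOpen_Ioi.mem_nhds hx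
  have h1 : DifferentiableAt ℝ (iteratedDerivWithin k h (Set.Ioi 0)) x :=
    hd.differentiableAt hmem
  have heq : iteratedDerivWithin k h (Set.Ioi 0) =ᶠ[nhds x] iteratedDeriv k h :=
    eventually_of_mem hmem (fun y hy => itdw_eq_itd h k hy)
  exact (heq.differentiableAt_iff).mp h1

lemma leibniz_mul_id (h : ℝ → ℝ) (hh : ContDiffOn ℝ (⊤ : ℕ∞) h (Set.Ioi 0)) :
    ∀ (k : ℕ), ∀ x ∈ Set.Ioi (0:ℝ),
      iteratedDeriv (k+1) (fun y => y * h y) x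
        = x * iteratedDeriv (k+1) h x + (k+1) * iteratedDeriv k h x := by
  intro k
  induction k with
  | zero =>
    intro x hx
    rw [iteratedDeriv_succ, iteratedDeriv_succ, iteratedDeriv_zero, iteratedDeriv_zero]
    have hd0 : DifferentiableAt ℝ h x := by
      simpa using diff_itd h hh 0 hx
    rw [deriv_fun_mul differentiableAt_fun_id hd0]
    simp; ring
  | succ k ih =>
    intro x hx
    have hmem : Set.Ioi (0:ℝ) ∈ nhds x := isOpen_Ioi.mem_nhds hx
    have heq : iteratedDeriv (k+1) (fun y => y * h y)
        =ᶠ[nhds x] fun y => y * iteratedDeriv (k+1) h y + (k+1) * iteratedDeriv k h y :=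
      eventually_of_mem hmem (fun y hy => ih y hy)
    have hdk1 : DifferentiableAt ℝ (iteratedDeriv (k+1) h) x := diff_itd h hh (k+1) hx
    have hdk : DifferentiableAt ℝ (iteratedDeriv k h) x := diff_itd h hh k hx
    rw [iteratedDeriv_succ, heq.deriv_eq]
    rw [deriv_fun_add (differentiableAt_fun_id.fun_mul hdk1) (hdk.const_mul _)]
    rw [deriv_fun_mul differentiableAt_fun_id hdk1, deriv_const_mul _ hdk]
    rw [← iteratedDeriv_succ, ← iteratedDeriv_succ]
    simp only [deriv_id'']
    push_cast
    ring

/-- For a smooth `f` on `(0,∞)` and `n ≥ 0`, writing `f_(k)(x) = (d/dx)^k [x^k f(x)]`: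
if `f_(n+1)(x) ≥ 0` for all `x > 0` and `f_(n)` has a finite limit as `x → 0⁺`,
then `f_(n)(x) ≥ 0` for all `x > 0`. -/
theorem nonneg_of_nonneg_succ (f : ℝ → ℝ)
    (hf : ContDiffOn ℝ (⊤ : ℕ∞) f (Set.Ioi 0)) (n : ℕ)
    (hnext : ∀ x > (0 : ℝ), 0 ≤ iteratedDeriv (n + 1) (fun y => y ^ (n + 1) * f y) x)
    (hlim : ∃ L : ℝ, Tendsto (fun x => iteratedDeriv n (fun y => y ^ n * f y) x)
      (nhdsWithin 0 (Set.Ioi 0)) (nhds L)) :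
    ∀ x > (0 : ℝ), 0 ≤ iteratedDeriv n (fun y => y ^ n * f y) x := by
  obtain ⟨L, hL⟩ := hlim
  set h : ℝ → ℝ := fun y => y ^ n * f y with hh_def
  have hh : ContDiffOn ℝ (⊤ : ℕ∞) h (Set.Ioi 0) :=
    (contDiff_id.pow n).contDiffOn.mul hf
  set g : ℝ → ℝ := fun x => iteratedDeriv n h x with hg_def
  set G : ℝ → ℝ := fun x => x ^ (n+1) * g x with hG_def
  have hfun : (fun y : ℝ => y ^ (n+1) * f y) = fun y => y * h y := by
    funext y; simp only [hh_def]; ring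
  have hGderiv : ∀ x ∈ Set.Ioi (0:ℝ), HasDerivAt G
      (x ^ n * iteratedDeriv (n+1) (fun y => y ^ (n+1) * f y) x) x := by
    intro x hx
    have hdg : DifferentiableAt ℝ g x := diff_itd h hh n hx
    have h1 : HasDerivAt g (iteratedDeriv (n+1) h x) x := by
      rw [iteratedDeriv_succ]; exact hdg.hasDerivAt
    have h2 : HasDerivAt (fun y : ℝ => y ^ (n+1)) ((n+1) * x ^ n) x := by
      simpa using hasDerivAt_pow (n+1) x
    have h3 := h2.mul h1
    have h4 : iteratedDeriv (n+1) (fun y => y ^ (n+1) * f y) x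
        = x * iteratedDeriv (n+1) h x + (n+1) * iteratedDeriv n h x := by
      rw [hfun]; exact leibniz_mul_id h hh n x hx
    refine h3.congr_deriv ?_
    rw [h4]; push_cast; ring
  have hcont : ContinuousOn G (Set.Ioi 0) := fun x hx =>
    ((hGderiv x hx).differentiableAt.continuousAt).continuousWithinAt
  have hmono : MonotoneOn G (Set.Ioi 0) := by
    apply monotoneOn_of_deriv_nonneg (convex_Ioi 0) hcont
    · intro x hx
      rw [interior_Ioi] at hx
      exact ((hGderiv x hx).differentiableAt).differentiableWithinAt
    · intro x hx
      rw [interior_Ioi] at hx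
      rw [(hGderiv x hx).deriv]
      exact mul_nonneg (pow_nonneg (le_of_lt hx) n) (hnext x hx)
  have hT : Tendsto G (nhdsWithin 0 (Set.Ioi 0)) (nhds 0) := by
    have h5 : Tendsto (fun x : ℝ => x ^ (n+1)) (nhdsWithin 0 (Set.Ioi 0)) (nhds 0) := by
      have := ((continuous_pow (n+1)).tendsto (0:ℝ)).mono_left
        (nhdsWithin_le_nhds (s := Set.Ioi (0:ℝ)))
      simpa using this
    have := h5.mul hL
    simpa using this
  intro x hx
  have hGx : 0 ≤ G x := by
    refine le_of_tendsto hT ?_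
    have hmem : Set.Ioo (0:ℝ) x ∈ nhdsWithin 0 (Set.Ioi 0) :=
      Ioo_mem_nhdsGT_of_mem ⟨le_refl 0, hx⟩
    filter_upwards [hmem] with y hy
    exact hmono hy.1 hx (le_of_lt hy.2)
  have hxp : (0:ℝ) < x ^ (n+1) := pow_pos hx (n+1)
  have : G x = x ^ (n+1) * g x := rfl
  nlinarith [hGx]
end

section
/- Let f : (0,∞) → ℝ be infinitely differentiable, let n be a nonnegative integer, let a be a real number with a < n+1, and write f_{(k)}(x) = (d/dx)^k [x^k f(x)]. Suppose that the function x ↦ x^a f_{(n+1)}(x) is completely monotonic on (0,∞) and that x^{n+1} f_{(n)}(x) → 0 as x → 0⁺. Then the function x ↦ x^a f_{(n)}(x) is completely monotonic on (0,∞). -/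
open Filter
open Set Topology

lemma aux_iter_contDiffOn {h : ℝ → ℝ} (hh : ContDiffOn ℝ (⊤ : ℕ∞) h (Set.Ioi 0)) (m : ℕ) :
    ContDiffOn ℝ (⊤ : ℕ∞) (iteratedDeriv m h) (Set.Ioi 0) := by
  induction m with
  | zero => simpa using hh
  | succ k ih =>
    rw [iteratedDeriv_succ]
    exact ih.deriv_of_isOpen isOpen_Ioi (by simp)

lemma aux_diffAt {h : ℝ → ℝ} (hh : ContDiffOn ℝ (⊤ : ℕ∞) h (Set.Ioi 0)) {x : ℝ} (hx : 0 < x) :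
    DifferentiableAt ℝ h x :=
  ((hh.differentiableOn (by simp)).differentiableAt (Ioi_mem_nhds hx))

lemma aux_iter_diffAt {h : ℝ → ℝ} (hh : ContDiffOn ℝ (⊤ : ℕ∞) h (Set.Ioi 0)) (m : ℕ) {x : ℝ}
    (hx : 0 < x) : DifferentiableAt ℝ (iteratedDeriv m h) x :=
  aux_diffAt (aux_iter_contDiffOn hh m) hx

lemma aux_leibniz {h : ℝ → ℝ} (hh : ContDiffOn ℝ (⊤ : ℕ∞) h (Set.Ioi 0)) (m : ℕ) :
    ∀ x ∈ Set.Ioi (0:ℝ), iteratedDeriv (m+1) (fun y => y * h y) x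
      = x * iteratedDeriv (m+1) h x + ((m:ℝ)+1) * iteratedDeriv m h x := by
  induction m with
  | zero =>
    intro x hx
    have hd : DifferentiableAt ℝ h x := aux_diffAt hh hx
    rw [iteratedDeriv_one, iteratedDeriv_one, iteratedDeriv_zero]
    rw [deriv_fun_mul differentiableAt_fun_id hd]
    simp; ring
  | succ k ih =>
    intro x hx
    have ev : iteratedDeriv (k+1) (fun y => y * h y)
        =ᶠ[𝓝 x] fun z => z * iteratedDeriv (k+1) h z + ((k:ℝ)+1) * iteratedDeriv k h z :=
      eventually_of_mem (Ioi_mem_nhds hx) ih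
    rw [iteratedDeriv_succ, ev.deriv_eq]
    have d1 : DifferentiableAt ℝ (iteratedDeriv (k+1) h) x := aux_iter_diffAt hh (k+1) hx
    have d2 : DifferentiableAt ℝ (iteratedDeriv k h) x := aux_iter_diffAt hh k hx
    rw [deriv_fun_add (differentiableAt_fun_id.fun_mul d1) (d2.const_mul _),
      deriv_fun_mul differentiableAt_fun_id d1, deriv_const_mul _ d2,
      ← iteratedDeriv_succ, ← iteratedDeriv_succ]
    push_cast
    simp; ring

/-- For a smooth `f` on `(0,∞)`, `n ≥ 0`, and a real `a < n+1`, writing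
`f_(k)(x) = (d/dx)^k [x^k f(x)]`: if `x ↦ x^a f_(n+1)(x)` is completely monotonic
on `(0,∞)` and `x^(n+1) f_(n)(x) → 0` as `x → 0⁺`, then `x ↦ x^a f_(n)(x)` is
completely monotonic on `(0,∞)`. -/
theorem completelyMonotonic_descend (f : ℝ → ℝ)
    (hf : ContDiffOn ℝ (⊤ : ℕ∞) f (Set.Ioi 0)) (n : ℕ) (a : ℝ) (ha : a < n + 1)
    (hcm : CompletelyMonotonicOn
      (fun x => x ^ a * iteratedDeriv (n + 1) (fun y => y ^ (n + 1) * f y) x))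
    (hlim : Tendsto (fun x => x ^ (n + 1) * iteratedDeriv n (fun y => y ^ n * f y) x)
      (nhdsWithin 0 (Set.Ioi 0)) (nhds 0)) :
    CompletelyMonotonicOn
      (fun x => x ^ a * iteratedDeriv n (fun y => y ^ n * f y) x) := by
  set c : ℝ := (n:ℝ) + 1 - a with hc_def
  have hc : 0 < c := by rw [hc_def]; linarith
  have hpoly : ContDiffOn ℝ (⊤ : ℕ∞) (fun y : ℝ => y ^ n * f y) (Set.Ioi 0) := by
    exact ((contDiff_id.pow n).contDiffOn).mul hf
  set w := iteratedDeriv n (fun y : ℝ => y ^ n * f y) with hw_def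
  set G := (fun x : ℝ => x ^ a * iteratedDeriv (n + 1) (fun y => y ^ (n + 1) * f y) x)
    with hG_def
  set u := (fun x : ℝ => x ^ a * w x) with hu_def
  have hw : ContDiffOn ℝ (⊤ : ℕ∞) w (Set.Ioi 0) := aux_iter_contDiffOn hpoly n
  have hra : ContDiffOn ℝ (⊤ : ℕ∞) (fun x : ℝ => x ^ a) (Set.Ioi 0) := fun x hx =>
    (Real.contDiffAt_rpow_const_of_ne (ne_of_gt hx)).contDiffWithinAt
  have hu : ContDiffOn ℝ (⊤ : ℕ∞) u (Set.Ioi 0) := hra.mul hw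
  have hG : ContDiffOn ℝ (⊤ : ℕ∞) G (Set.Ioi 0) := hcm.1
  have hGpos : ∀ (k : ℕ), ∀ x ∈ Set.Ioi (0:ℝ), 0 ≤ (-1:ℝ)^k * iteratedDeriv k G x :=
    fun k x hx => hcm.2 k x hx
  -- basic ODE: x u' + c u = G on (0,∞)
  have key : ∀ x ∈ Set.Ioi (0:ℝ), x * deriv u x + c * u x = G x := by
    intro x hx
    have hx0 : (0:ℝ) < x := hx
    have hfe : (fun y : ℝ => y ^ (n+1) * f y) = fun y => y * (y ^ n * f y) := by
      funext y; ring
    have hWx : iteratedDeriv (n + 1) (fun y => y ^ (n + 1) * f y) x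
        = x * deriv w x + ((n:ℝ)+1) * w x := by
      rw [hfe, aux_leibniz hpoly n x hx, hw_def, ← iteratedDeriv_succ]
    have hrd : HasDerivAt (fun z : ℝ => z ^ a) (a * x ^ (a-1)) x :=
      Real.hasDerivAt_rpow_const (Or.inl hx0.ne')
    have hwd : HasDerivAt w (deriv w x) x := (aux_diffAt hw hx).hasDerivAt
    have hud : HasDerivAt u (a * x ^ (a-1) * w x + x ^ a * deriv w x) x := hrd.mul hwd
    rw [hu_def, hG_def]
    simp only []
    rw [hud.deriv, hWx]
    have hxa : x * x ^ (a - 1) = x ^ a := by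
      rw [mul_comm, ← Real.rpow_add_one hx0.ne']; ring_nf
    rw [hc_def]
    linear_combination (a * w x) * hxa
  have ode : ∀ (k : ℕ), ∀ x ∈ Set.Ioi (0:ℝ),
      x * iteratedDeriv (k+1) u x + (c + k) * iteratedDeriv k u x = iteratedDeriv k G x := by
    intro k
    induction k with
    | zero =>
      intro x hx
      simpa [iteratedDeriv_one, iteratedDeriv_zero] using key x hx
    | succ k ih =>
      intro x hx
      have ev : (fun z => z * iteratedDeriv (k+1) u z + (c + k) * iteratedDeriv k u z)
          =ᶠ[𝓝 x] iteratedDeriv k G := eventually_of_mem (Ioi_mem_nhds hx) ih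
      have d1 : DifferentiableAt ℝ (iteratedDeriv (k+1) u) x := aux_iter_diffAt hu (k+1) hx
      have d2 : DifferentiableAt ℝ (iteratedDeriv k u) x := aux_iter_diffAt hu k hx
      have := ev.deriv_eq
      rw [deriv_fun_add (differentiableAt_fun_id.fun_mul d1) (d2.const_mul _),
        deriv_fun_mul differentiableAt_fun_id d1, deriv_const_mul _ d2,
        ← iteratedDeriv_succ, ← iteratedDeriv_succ] at this
      rw [iteratedDeriv_succ (f := G), ← this]
      push_cast
      simp
      ring
  have hφd : ∀ (k : ℕ), ∀ x ∈ Set.Ioi (0:ℝ),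
      HasDerivAt (fun z => z ^ (c + (k:ℝ)) * iteratedDeriv k u z)
        (x ^ (c + (k:ℝ) - 1) * iteratedDeriv k G x) x := by
    intro k x hx
    have hx0 : (0:ℝ) < x := hx
    have h1 : HasDerivAt (fun z : ℝ => z ^ (c + (k:ℝ)))
        ((c + (k:ℝ)) * x ^ (c + (k:ℝ) - 1)) x := Real.hasDerivAt_rpow_const (Or.inl hx0.ne')
    have h2 : HasDerivAt (iteratedDeriv k u) (iteratedDeriv (k+1) u x) x := by
      have := (aux_iter_diffAt hu k hx).hasDerivAt
      rwa [← iteratedDeriv_succ] at this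
    have h3 := h1.fun_mul h2
    refine h3.congr_deriv ?_
    have hxx : x ^ (c + (k:ℝ)) = x ^ (c + (k:ℝ) - 1) * x := by
      rw [← Real.rpow_add_one hx0.ne']; ring_nf
    rw [← ode k x hx, hxx]; ring
  have hHcont : ∀ (k : ℕ), ContinuousOn (fun z => (-1:ℝ)^k * iteratedDeriv k G z)
      (Set.Ioi 0) := fun k => continuousOn_const.mul (aux_iter_contDiffOn hG k).continuousOn
  have hHderiv : ∀ (k : ℕ), ∀ x ∈ Set.Ioi (0:ℝ),
      deriv (fun z => (-1:ℝ)^k * iteratedDeriv k G z) x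
        = -((-1:ℝ)^(k+1) * iteratedDeriv (k+1) G x) := by
    intro k x hx
    rw [deriv_const_mul _ (aux_iter_diffAt hG k hx), ← iteratedDeriv_succ, pow_succ]
    ring
  have hHanti : ∀ (k : ℕ), AntitoneOn (fun z => (-1:ℝ)^k * iteratedDeriv k G z)
      (Set.Ioi 0) := by
    intro k
    apply antitoneOn_of_deriv_nonpos (convex_Ioi 0) (hHcont k)
    · rw [interior_Ioi]
      exact fun x hx => (differentiableAt_const _|>.mul (aux_iter_diffAt hG k hx)).differentiableWithinAt
    · rw [interior_Ioi]
      intro x hx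
      rw [hHderiv k x hx]
      exact neg_nonpos.mpr (hGpos (k+1) x hx)
  have hmvt : ∀ (k : ℕ), ∀ x ∈ Set.Ioi (0:ℝ),
      (x/2) * ((-1:ℝ)^(k+1) * iteratedDeriv (k+1) G x)
        ≤ (-1:ℝ)^k * iteratedDeriv k G (x/2) := by
    intro k x hx
    have hx0 : (0:ℝ) < x := hx
    have hhalf : (0:ℝ) < x/2 := by linarith
    have hsub : Set.Icc (x/2) x ⊆ Set.Ioi (0:ℝ) := fun z hz => lt_of_lt_of_le hhalf hz.1
    obtain ⟨ξ, hξ, hslope⟩ := exists_deriv_eq_slope (fun z => (-1:ℝ)^k * iteratedDeriv k G z)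
      (half_lt_self hx0) ((hHcont k).mono hsub)
      (fun z hz => (differentiableAt_const _|>.mul
        (aux_iter_diffAt hG k (hsub (Set.Ioo_subset_Icc_self hz)))).differentiableWithinAt)
    have hξ0 : ξ ∈ Set.Ioi (0:ℝ) := lt_trans hhalf hξ.1
    rw [hHderiv k ξ hξ0] at hslope
    have anti := hHanti (k+1) hξ0 hx (le_of_lt hξ.2)
    have hkx : 0 ≤ (-1:ℝ)^k * iteratedDeriv k G x := hGpos k x hx
    have hxx : x - x/2 = x/2 := by ring
    dsimp only at anti
    rw [hxx, eq_div_iff hhalf.ne'] at hslope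
    nlinarith [hGpos (k+1) x hx]
  have ht : Tendsto (fun x : ℝ => x/2) (𝓝[>] (0:ℝ)) (𝓝[>] (0:ℝ)) := by
    apply tendsto_nhdsWithin_of_tendsto_nhds_of_eventually_within
    · have h0 : Tendsto (fun x : ℝ => x/2) (𝓝 (0:ℝ)) (𝓝 ((0:ℝ)/2)) :=
        (tendsto_id (α := ℝ)).div_const 2
      simpa using h0.mono_left nhdsWithin_le_nhds
    · exact eventually_of_mem self_mem_nhdsWithin fun x hx => by
        simp only [Set.mem_Ioi] at hx ⊢; linarith
  have hφ0lim : Tendsto (fun x : ℝ => x ^ c * u x) (𝓝[>] (0:ℝ)) (𝓝 0) := by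
    apply hlim.congr'
    filter_upwards [self_mem_nhdsWithin] with x hx
    have hx0 : (0:ℝ) < x := hx
    rw [hu_def]
    dsimp only
    rw [← mul_assoc, ← Real.rpow_add hx0, show c + a = ((n:ℝ)+1) by rw [hc_def]; ring,
      show ((n:ℝ)+1) = ((n+1 : ℕ):ℝ) by push_cast; ring, Real.rpow_natCast]
  set K : ℝ := min ((1/2:ℝ) ^ (c-1)) 1 with hK_def
  have hKpos : 0 < K := lt_min (Real.rpow_pos_of_pos (by norm_num) _) one_pos
  have hF0d : ∀ z ∈ Set.Ioi (0:ℝ),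
      HasDerivAt (fun z : ℝ => z ^ c * u z) (z ^ (c-1) * G z) z := by
    intro z hz
    have := hφd 0 z hz
    simpa using this
  have hbase : ∀ x ∈ Set.Ioi (0:ℝ),
      K/2 * (x ^ c * G x) ≤ x ^ c * u x - (x/2) ^ c * u (x/2) := by
    intro x hx
    have hx0 : (0:ℝ) < x := hx
    have hhalf : (0:ℝ) < x/2 := by linarith
    have hsub : Set.Icc (x/2) x ⊆ Set.Ioi (0:ℝ) := fun z hz => lt_of_lt_of_le hhalf hz.1
    obtain ⟨ξ, hξ, hslope⟩ := exists_deriv_eq_slope (fun z : ℝ => z ^ c * u z)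
      (half_lt_self hx0)
      (fun z hz => (hF0d z (hsub hz)).continuousAt.continuousWithinAt)
      (fun z hz =>
        (hF0d z (hsub (Set.Ioo_subset_Icc_self hz))).differentiableAt.differentiableWithinAt)
    have hξ0 : ξ ∈ Set.Ioi (0:ℝ) := lt_trans hhalf hξ.1
    rw [(hF0d ξ hξ0).deriv, show x - x/2 = x/2 by ring, eq_div_iff hhalf.ne'] at hslope
    have hGanti : AntitoneOn G (Set.Ioi 0) := by simpa using hHanti 0
    have hGx : 0 ≤ G x := by simpa using hGpos 0 x hx
    have hGξx : G x ≤ G ξ := hGanti hξ0 hx hξ.2.le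
    have hxpow : (0:ℝ) ≤ x ^ (c-1 : ℝ) := (Real.rpow_pos_of_pos hx0 _).le
    have hξpow : x ^ (c-1:ℝ) * K ≤ ξ ^ (c-1:ℝ) := by
      rcases le_or_gt 0 (c-1) with h|h
      · have h1 : (x/2) ^ (c-1:ℝ) ≤ ξ ^ (c-1:ℝ) :=
          Real.rpow_le_rpow hhalf.le hξ.1.le h
        have h2 : (x/2) ^ (c-1:ℝ) = x ^ (c-1:ℝ) * (1/2:ℝ) ^ (c-1:ℝ) := by
          rw [show x/2 = x * (1/2) by ring, Real.mul_rpow hx0.le (by norm_num)]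
        have h3 : x ^ (c-1:ℝ) * K ≤ x ^ (c-1:ℝ) * (1/2:ℝ)^(c-1:ℝ) :=
          mul_le_mul_of_nonneg_left (min_le_left _ _) hxpow
        linarith
      · have h1 : x ^ (c-1:ℝ) ≤ ξ ^ (c-1:ℝ) :=
          Real.rpow_le_rpow_of_nonpos hξ0 hξ.2.le h.le
        have h3 : x ^ (c-1:ℝ) * K ≤ x ^ (c-1:ℝ) * 1 :=
          mul_le_mul_of_nonneg_left (min_le_right _ _) hxpow
        linarith
    have hxc : x ^ c = x ^ (c-1:ℝ) * x := by
      rw [← Real.rpow_add_one hx0.ne']; ring_nf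
    have hchain : x ^ (c-1:ℝ) * K * G x ≤ ξ ^ (c-1:ℝ) * G ξ := by
      have e1 : x ^ (c-1:ℝ) * K * G x ≤ ξ ^ (c-1:ℝ) * G x :=
        mul_le_mul_of_nonneg_right hξpow hGx
      have e2 : ξ ^ (c-1:ℝ) * G x ≤ ξ ^ (c-1:ℝ) * G ξ :=
        mul_le_mul_of_nonneg_left hGξx (Real.rpow_pos_of_pos hξ0 _).le
      linarith
    have hfin := mul_le_mul_of_nonneg_right hchain hhalf.le
    rw [← hslope, hxc]
    nlinarith [hfin]
  have hGlim : ∀ (k : ℕ), Tendsto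
      (fun x : ℝ => x ^ (c + (k:ℝ)) * ((-1:ℝ)^k * iteratedDeriv k G x))
      (𝓝[>] (0:ℝ)) (𝓝 0) := by
    intro k
    induction k with
    | zero =>
      have g0 : Tendsto (fun x : ℝ => 2/K * (x ^ c * u x - (x/2) ^ c * u (x/2)))
          (𝓝[>] (0:ℝ)) (𝓝 0) := by
        have h5 : Tendsto (fun x : ℝ => (x/2) ^ c * u (x/2)) (𝓝[>] (0:ℝ)) (𝓝 0) :=
          hφ0lim.comp ht
        have h6 := (hφ0lim.sub h5).const_mul (2/K)
        simpa using h6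
      apply squeeze_zero' ?_ ?_ g0
      · filter_upwards [self_mem_nhdsWithin] with x hx
        exact mul_nonneg (Real.rpow_pos_of_pos hx _).le (hGpos 0 x hx)
      · filter_upwards [self_mem_nhdsWithin] with x hx
        have h2 := mul_le_mul_of_nonneg_left (hbase x hx)
          (le_of_lt (by positivity : (0:ℝ) < 2/K))
        have h3 : 2/K * (K/2 * (x ^ c * G x)) = x ^ c * G x := by
          field_simp
        rw [h3] at h2
        simpa using h2
    | succ k ih =>
      have g0 : Tendsto (fun x : ℝ => (2 * (2:ℝ) ^ (c + (k:ℝ))) *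
          ((x/2) ^ (c + (k:ℝ)) * ((-1:ℝ)^k * iteratedDeriv k G (x/2))))
          (𝓝[>] (0:ℝ)) (𝓝 0) := by
        have h5 : Tendsto (fun x : ℝ => (x/2) ^ (c + (k:ℝ)) *
            ((-1:ℝ)^k * iteratedDeriv k G (x/2))) (𝓝[>] (0:ℝ)) (𝓝 0) := ih.comp ht
        have h6 := h5.const_mul (2 * (2:ℝ) ^ (c + (k:ℝ)))
        rwa [mul_zero] at h6
      apply squeeze_zero' ?_ ?_ g0
      · filter_upwards [self_mem_nhdsWithin] with x hx
        exact mul_nonneg (Real.rpow_pos_of_pos hx _).le (hGpos (k+1) x hx)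
      · filter_upwards [self_mem_nhdsWithin] with x hx
        have hx0 : (0:ℝ) < x := hx
        have hhalf : (0:ℝ) < x/2 := by linarith
        have hm := hmvt k x hx
        have hxpow : (0:ℝ) ≤ x ^ (c + (k:ℝ)) := (Real.rpow_pos_of_pos hx0 _).le
        have hsplit : x ^ (c + ((k:ℝ) + 1)) = x ^ (c + (k:ℝ)) * x := by
          rw [show c + ((k:ℝ)+1) = (c + (k:ℝ)) + 1 by ring]
          exact Real.rpow_add_one hx0.ne' _
        have hdouble : x ^ (c + (k:ℝ)) = (2:ℝ) ^ (c + (k:ℝ)) * (x/2) ^ (c + (k:ℝ)) := by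
          rw [show x = 2 * (x/2) by ring, Real.mul_rpow (by norm_num) hhalf.le]
          ring_nf
        have step1 : x ^ (c + (k:ℝ)) * (x * ((-1:ℝ)^(k+1) * iteratedDeriv (k+1) G x))
            ≤ x ^ (c + (k:ℝ)) * (2 * ((-1:ℝ)^k * iteratedDeriv k G (x/2))) :=
          mul_le_mul_of_nonneg_left (by nlinarith [hm]) hxpow
        push_cast
        calc x ^ (c + ((k:ℝ)+1)) * ((-1:ℝ)^(k+1) * iteratedDeriv (k+1) G x)
            = x ^ (c + (k:ℝ)) * (x * ((-1:ℝ)^(k+1) * iteratedDeriv (k+1) G x)) := by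
              rw [hsplit]; ring
          _ ≤ x ^ (c + (k:ℝ)) * (2 * ((-1:ℝ)^k * iteratedDeriv k G (x/2))) := step1
          _ = (2 * (2:ℝ) ^ (c + (k:ℝ))) *
              ((x/2) ^ (c + (k:ℝ)) * ((-1:ℝ)^k * iteratedDeriv k G (x/2))) := by
              rw [hdouble]; ring
  have hφlim : ∀ (k:ℕ), Tendsto (fun x : ℝ => x ^ (c + (k:ℝ)) * iteratedDeriv k u x)
      (𝓝[>] (0:ℝ)) (𝓝 0) := by
    intro k
    induction k with
    | zero => simpa using hφ0lim
    | succ k ih =>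
      have hsq : ((-1:ℝ)^k) * ((-1:ℝ)^k) = 1 := by
        rw [← pow_add, ← two_mul, pow_mul]; norm_num
      have h1 : Tendsto (fun x : ℝ => x ^ (c + (k:ℝ)) * iteratedDeriv k G x)
          (𝓝[>] (0:ℝ)) (𝓝 0) := by
        have h2 := (hGlim k).const_mul ((-1:ℝ)^k)
        rw [mul_zero] at h2
        apply h2.congr
        intro x
        calc (-1:ℝ)^k * (x ^ (c + (k:ℝ)) * ((-1:ℝ)^k * iteratedDeriv k G x))
            = ((-1:ℝ)^k * (-1:ℝ)^k) * (x ^ (c + (k:ℝ)) * iteratedDeriv k G x) := by ring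
          _ = x ^ (c + (k:ℝ)) * iteratedDeriv k G x := by rw [hsq, one_mul]
      have h3 := h1.sub (ih.const_mul (c + (k:ℝ)))
      rw [mul_zero, sub_zero] at h3
      apply h3.congr'
      filter_upwards [self_mem_nhdsWithin] with x hx
      have hx0 : (0:ℝ) < x := hx
      have hsplit : x ^ (c + ((k:ℝ) + 1)) = x ^ (c + (k:ℝ)) * x := by
        rw [show c + ((k:ℝ)+1) = (c + (k:ℝ)) + 1 by ring]
        exact Real.rpow_add_one hx0.ne' _
      have ho := ode k x hx
      show x ^ (c + (k:ℝ)) * iteratedDeriv k G x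
          - (c + (k:ℝ)) * (x ^ (c + (k:ℝ)) * iteratedDeriv k u x)
          = x ^ (c + ((k:ℕ)+1:ℕ)) * iteratedDeriv (k+1) u x
      push_cast
      rw [hsplit]
      linear_combination (-(x ^ (c + (k:ℝ)))) * ho
  constructor
  · exact hu
  · intro k x hx
    have hx0 : (0:ℝ) < x := hx
    have hψd : ∀ z ∈ Set.Ioi (0:ℝ),
        HasDerivAt (fun z : ℝ => (-1:ℝ)^k * (z ^ (c + (k:ℝ)) * iteratedDeriv k u z))
          (z ^ (c + (k:ℝ) - 1) * ((-1:ℝ)^k * iteratedDeriv k G z)) z := by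
      intro z hz
      have := (hφd k z hz).const_mul ((-1:ℝ)^k)
      refine this.congr_deriv ?_
      ring
    have hmono : MonotoneOn
        (fun z : ℝ => (-1:ℝ)^k * (z ^ (c + (k:ℝ)) * iteratedDeriv k u z)) (Set.Ioi 0) := by
      apply monotoneOn_of_deriv_nonneg (convex_Ioi 0)
      · exact fun z hz => ((hψd z hz).continuousAt.continuousWithinAt)
      · rw [interior_Ioi]
        exact fun z hz => (hψd z hz).differentiableAt.differentiableWithinAt
      · rw [interior_Ioi]
        intro z hz
        rw [(hψd z hz).deriv]
        exact mul_nonneg (Real.rpow_pos_of_pos hz _).le (hGpos k z hz)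
    have hψlim : Tendsto (fun z : ℝ => (-1:ℝ)^k * (z ^ (c + (k:ℝ)) * iteratedDeriv k u z))
        (𝓝[>] (0:ℝ)) (𝓝 0) := by
      have := (hφlim k).const_mul ((-1:ℝ)^k)
      simpa using this
    have hψx : 0 ≤ (-1:ℝ)^k * (x ^ (c + (k:ℝ)) * iteratedDeriv k u x) := by
      apply le_of_tendsto hψlim
      filter_upwards [Ioo_mem_nhdsGT_of_mem (Set.left_mem_Ico.mpr hx0)] with y hy
      exact hmono hy.1 hx (le_of_lt hy.2)
    have hpos : (0:ℝ) < x ^ (c + (k:ℝ)) := Real.rpow_pos_of_pos hx0 _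
    have hψx' : 0 ≤ x ^ (c + (k:ℝ)) * ((-1:ℝ)^k * iteratedDeriv k u x) := by
      rw [mul_left_comm]; exact hψx
    exact nonneg_of_mul_nonneg_right hψx' hpos
end
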